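/- arXiv:2310.11219 — 3 statements merged into one kernel-verified Lean document; each statement's English description precedes it below -/
import Mathlib

section
/- Let d ≥ 1, u ∈ [0,d] and C ≥ 1. Let {δ_m}_{m≥0} ⊂ 2^{−ℕ} with δ₀ = 1 be a super-geometrically decaying sequence, i.e. for every ε > 0 there is m_ε such that δ_m ≤ ε·δ_{m−1} for all m ≥ m_ε. Let E = ⋂_{m≥0} E_m ⊆ [0,1]^d be nonempty, where each E_m is a finite union of closed dyadic δ_m-cubes and E_{m+1} ⊆ E_m. Assume that for every m ≥ 0, every dyadic δ_m-cube Q intersecting E, every dyadic scale r with δ_{m+1} ≤ r ≤ δ_m, and every dyadic r-cube 𝐪 ⊆ Q, one has |E ∩ 𝐪|_{δ_{m+1}} ≤ C·(r/δ_m)^u·|E ∩ Q|_{δ_{m+1}}. Then dimH(E) ≥ u. -/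
open MeasureTheory Metric Set
open scoped ENNReal NNReal

noncomputable section

/-- The standard (half-open) dyadic cube of side length `2^{-k}` indexed by `m : Fin d → ℤ`. -/
def dyadicCube (d k : ℕ) (m : Fin d → ℤ) : Set (EuclideanSpace ℝ (Fin d)) :=
  {x | ∀ i, (m i : ℝ) * (2 : ℝ) ^ (-(k : ℤ)) ≤ x i ∧
            x i < ((m i : ℝ) + 1) * (2 : ℝ) ^ (-(k : ℤ))}

/-- The closed dyadic cube of side length `2^{-k}` indexed by `m : Fin d → ℤ`. -/
def closedDyadicCube (d k : ℕ) (m : Fin d → ℤ) : Set (EuclideanSpace ℝ (Fin d)) :=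
  {x | ∀ i, (m i : ℝ) * (2 : ℝ) ^ (-(k : ℤ)) ≤ x i ∧
            x i ≤ ((m i : ℝ) + 1) * (2 : ℝ) ^ (-(k : ℤ))}

/-- The dyadic `2^{-k}`-covering number `|P|_{2^{-k}}`. -/
def covNum (d k : ℕ) (P : Set (EuclideanSpace ℝ (Fin d))) : ℕ :=
  Set.ncard {m : Fin d → ℤ | (dyadicCube d k m ∩ P).Nonempty}

namespace Aux13

variable {d : ℕ}

lemma neg_zpow_eq (r : ℕ) : (2:ℝ) ^ (-(r:ℤ)) = ((2:ℝ) ^ r)⁻¹ := by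
  rw [zpow_neg, zpow_natCast]

lemma le_iff_mul_inv (c : ℝ) (hc : 0 < c) (a x : ℝ) : a * c⁻¹ ≤ x ↔ a ≤ x * c := by
  rw [← div_eq_mul_inv, div_le_iff₀ hc]

lemma lt_iff_mul_inv (c : ℝ) (hc : 0 < c) (a x : ℝ) : x < a * c⁻¹ ↔ x * c < a := by
  rw [← div_eq_mul_inv, lt_div_iff₀ hc]

lemma mem_cube (r : ℕ) (m : Fin d → ℤ) (x : EuclideanSpace ℝ (Fin d)) :
    x ∈ dyadicCube d r m ↔ ∀ i, (m i : ℝ) ≤ x i * 2 ^ r ∧ x i * 2 ^ r < (m i : ℝ) + 1 := by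
  have h2 : (0:ℝ) < 2 ^ r := by positivity
  unfold dyadicCube
  simp only [Set.mem_setOf_eq, neg_zpow_eq, le_iff_mul_inv _ h2, lt_iff_mul_inv _ h2]

/-- index of the dyadic cube at scale `r` containing `x`. -/
def idx (d r : ℕ) (x : EuclideanSpace ℝ (Fin d)) : Fin d → ℤ := fun i => ⌊x i * 2 ^ r⌋

lemma mem_cube_iff {r : ℕ} {m : Fin d → ℤ} {x : EuclideanSpace ℝ (Fin d)} :
    x ∈ dyadicCube d r m ↔ idx d r x = m := by
  rw [mem_cube]
  constructor
  · intro hx; funext i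
    exact Int.floor_eq_iff.2 ⟨(hx i).1, by push_cast; exact (hx i).2⟩
  · rintro rfl i
    refine ⟨Int.floor_le _, ?_⟩
    have := Int.lt_floor_add_one (x i * 2 ^ r)
    push_cast at this ⊢; exact this

lemma mem_cube_idx (r : ℕ) (x : EuclideanSpace ℝ (Fin d)) : x ∈ dyadicCube d r (idx d r x) :=
  mem_cube_iff.2 rfl

lemma cube_disj {r : ℕ} {m m' : Fin d → ℤ} {x : EuclideanSpace ℝ (Fin d)}
    (h : x ∈ dyadicCube d r m) (h' : x ∈ dyadicCube d r m') : m = m' := by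
  rw [mem_cube_iff] at h h'; rw [← h, h']

/-- index of the ancestor at scale `r'` of the scale-`r` cube `q`. -/
def anc (d r' r : ℕ) (q : Fin d → ℤ) : Fin d → ℤ := fun i => ⌊(q i : ℝ) / 2 ^ (r - r')⌋

lemma floor_const_on_dyadic {a : ℤ} {e : ℕ} {z : ℝ}
    (h1 : (a : ℝ) / 2 ^ e ≤ z) (h2 : z < ((a : ℝ) + 1) / 2 ^ e) :
    ⌊z⌋ = ⌊(a : ℝ) / 2 ^ e⌋ := by
  have h2e : (0:ℝ) < 2 ^ e := by positivity
  refine Int.floor_eq_iff.2 ⟨le_trans (Int.floor_le _) h1, ?_⟩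
  by_contra hcon
  push_neg at hcon
  have hcon' : (⌊(a:ℝ)/2^e⌋ : ℝ) + 1 ≤ z := hcon
  have hfl : (a:ℝ)/2^e < (⌊(a:ℝ)/2^e⌋ : ℝ) + 1 := Int.lt_floor_add_one _
  have k1 : (a : ℝ) < ((⌊(a:ℝ)/2^e⌋ : ℝ) + 1) * 2 ^ e := by
    rw [← div_lt_iff₀ h2e]; exact hfl
  have k2 : ((⌊(a:ℝ)/2^e⌋ : ℝ) + 1) * 2 ^ e < (a : ℝ) + 1 := by
    rw [← lt_div_iff₀ h2e]; exact lt_of_le_of_lt hcon' h2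
  have ha : a < (⌊(a:ℝ)/2^e⌋ + 1) * 2 ^ e := by exact_mod_cast (by push_cast; exact k1 :
    ((a : ℤ) : ℝ) < (((⌊(a:ℝ)/2^e⌋ + 1) * 2 ^ e : ℤ) : ℝ))
  have hb : (⌊(a:ℝ)/2^e⌋ + 1) * 2 ^ e < a + 1 := by exact_mod_cast (by push_cast; exact k2 :
    (((⌊(a:ℝ)/2^e⌋ + 1) * 2 ^ e : ℤ) : ℝ) < ((a + 1 : ℤ) : ℝ))
  set t : ℤ := (2:ℤ) ^ e
  set b : ℤ := ⌊(a:ℝ)/2^e⌋ + 1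
  omega

lemma idx_anc {r' r : ℕ} (hr : r' ≤ r) {q : Fin d → ℤ} {x : EuclideanSpace ℝ (Fin d)}
    (hx : x ∈ dyadicCube d r q) : idx d r' x = anc d r' r q := by
  funext i
  rw [mem_cube] at hx
  rcases hx i with ⟨h1, h2⟩
  have he : (2:ℝ) ^ r = 2 ^ (r - r') * 2 ^ r' := by
    rw [← pow_add]; congr 1; omega
  have hp : (0:ℝ) < 2 ^ r' := by positivity
  have hp2 : (0:ℝ) < 2 ^ (r - r') := by positivity
  have l1 : (q i : ℝ) / 2 ^ (r - r') ≤ x i * 2 ^ r' := by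
    rw [div_le_iff₀ hp2]
    calc (q i : ℝ) ≤ x i * 2 ^ r := h1
    _ = x i * 2 ^ r' * 2 ^ (r - r') := by rw [he]; ring
  have l2 : x i * 2 ^ r' < ((q i : ℝ) + 1) / 2 ^ (r - r') := by
    rw [lt_div_iff₀ hp2]
    calc x i * 2 ^ r' * 2 ^ (r - r') = x i * 2 ^ r := by rw [he]; ring
    _ < (q i : ℝ) + 1 := h2
  exact floor_const_on_dyadic l1 l2

lemma cube_subset_anc {r' r : ℕ} (hr : r' ≤ r) (q : Fin d → ℤ) :
    dyadicCube d r q ⊆ dyadicCube d r' (anc d r' r q) := fun x hx =>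
  mem_cube_iff.2 (idx_anc hr hx)

lemma anc_eq_of_inter {r' r : ℕ} (hr : r' ≤ r) {q Q : Fin d → ℤ}
    (h : (dyadicCube d r q ∩ dyadicCube d r' Q).Nonempty) : Q = anc d r' r q := by
  rcases h with ⟨x, hx1, hx2⟩
  rw [mem_cube_iff] at hx2
  rw [← hx2, idx_anc hr hx1]

lemma anc_self {r : ℕ} (q : Fin d → ℤ) : anc d r r q = q := by
  funext i; simp [anc]


section Counting

open scoped Classical

variable {d : ℕ} {E : Set (EuclideanSpace ℝ (Fin d))}
  (hsub : E ⊆ {x | ∀ i, 0 ≤ x i ∧ x i ≤ 1})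

include hsub

lemma fin_idx (j : ℕ) (P : Set (EuclideanSpace ℝ (Fin d))) :
    {m : Fin d → ℤ | (dyadicCube d j m ∩ (E ∩ P)).Nonempty}.Finite := by
  apply Set.Finite.subset (Set.Finite.pi (fun _ : Fin d => Set.finite_Icc (0:ℤ) (2 ^ j)))
  rintro m ⟨x, hxc, hxE, -⟩
  rw [mem_cube] at hxc
  have hx := hsub hxE
  rw [Set.mem_pi]
  intro i _
  rw [Set.mem_Icc]
  rcases hxc i with ⟨h1, h2⟩
  rcases hx i with ⟨h3, h4⟩
  have hb1 : (0:ℝ) ≤ x i * 2 ^ j := by positivity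
  have hb2 : x i * 2 ^ j ≤ 2 ^ j := by
    calc x i * 2 ^ j ≤ 1 * 2 ^ j := by
          apply mul_le_mul_of_nonneg_right h4; positivity
    _ = 2 ^ j := one_mul _
  constructor
  · have : (0:ℝ) < (m i : ℝ) + 1 := lt_of_le_of_lt hb1 h2
    have : (-1 : ℤ) < m i := by exact_mod_cast (by push_cast; linarith : ((-1:ℤ):ℝ) < (m i : ℝ))
    omega
  · have : (m i : ℝ) ≤ ((2:ℤ)^j : ℝ) := by push_cast; linarith
    exact_mod_cast this

/-- The finite set of indices of scale-`j` dyadic cubes meeting `E ∩ P`. -/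
def Fs (j : ℕ) (P : Set (EuclideanSpace ℝ (Fin d))) : Finset (Fin d → ℤ) :=
  (fin_idx hsub j P).toFinset

lemma mem_Fs {j : ℕ} {P : Set (EuclideanSpace ℝ (Fin d))} {m : Fin d → ℤ} :
    m ∈ Fs hsub j P ↔ (dyadicCube d j m ∩ (E ∩ P)).Nonempty := by
  simp [Fs]

lemma covNum_eq_card (j : ℕ) (P : Set (EuclideanSpace ℝ (Fin d))) :
    covNum d j (E ∩ P) = (Fs hsub j P).card :=
  Set.ncard_eq_toFinset_card _ (fin_idx hsub j P)

/-- Grouping a sum over deep cubes by their scale-`r` ancestors. -/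
lemma sum_group {r j : ℕ} (hrj : r ≤ j) {P : Set (EuclideanSpace ℝ (Fin d))}
    (hP : ∀ q : Fin d → ℤ, (dyadicCube d r q ∩ (E ∩ P)).Nonempty → dyadicCube d r q ⊆ P)
    (f : (Fin d → ℤ) → ℝ) :
    ∑ e ∈ Fs hsub j P, f e
      = ∑ q ∈ Fs hsub r P, ∑ e ∈ Fs hsub j (dyadicCube d r q), f e := by
  classical
  rw [← Finset.sum_fiberwise_of_maps_to (g := anc d r j) (t := Fs hsub r P) ?_ f]
  · apply Finset.sum_congr rfl
    intro q hq
    apply Finset.sum_congr ?_ (fun _ _ => rfl)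
    ext e
    simp only [Finset.mem_filter, mem_Fs]
    constructor
    · rintro ⟨⟨x, hxc, hxE, hxP⟩, rfl⟩
      exact ⟨x, hxc, hxE, mem_cube_iff.2 (idx_anc hrj hxc)⟩
    · rintro ⟨y, hyc, hyE, hyq⟩
      have hanc : q = anc d r j e := anc_eq_of_inter hrj ⟨y, hyc, hyq⟩
      refine ⟨⟨y, hyc, hyE, ?_⟩, hanc.symm⟩
      exact hP q (mem_Fs hsub |>.1 hq) hyq
  · intro e he
    rcases (mem_Fs hsub).1 he with ⟨x, hxc, hxE, hxP⟩
    exact (mem_Fs hsub).2 ⟨x, mem_cube_iff.2 (idx_anc hrj hxc), hxE, hxP⟩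

omit hsub in
lemma covNum_single {j : ℕ} (e : Fin d → ℤ) :
    covNum d j (E ∩ dyadicCube d j e)
      = if (dyadicCube d j e ∩ E).Nonempty then 1 else 0 := by
  unfold covNum
  split_ifs with h
  · have : {m : Fin d → ℤ | (dyadicCube d j m ∩ (E ∩ dyadicCube d j e)).Nonempty} = {e} := by
      ext m
      simp only [Set.mem_setOf_eq, Set.mem_singleton_iff]
      constructor
      · rintro ⟨x, hxc, -, hxe⟩; exact cube_disj hxc hxe
      · rintro rfl
        rcases h with ⟨x, hxc, hxE⟩
        exact ⟨x, hxc, hxE, hxc⟩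
    rw [this, Set.ncard_singleton]
  · have : {m : Fin d → ℤ | (dyadicCube d j m ∩ (E ∩ dyadicCube d j e)).Nonempty} = ∅ := by
      ext m
      simp only [Set.mem_setOf_eq, Set.mem_empty_iff_false, iff_false]
      rintro ⟨x, hxc, hxE, hxe⟩
      exact h ⟨x, hxe, hxE⟩
    rw [this, Set.ncard_empty]

lemma covNum_pos {r j : ℕ} (hrj : r ≤ j) {q : Fin d → ℤ}
    (h : (dyadicCube d r q ∩ E).Nonempty) :
    1 ≤ covNum d j (E ∩ dyadicCube d r q) := by
  rcases h with ⟨x, hxc, hxE⟩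
  rw [covNum_eq_card hsub]
  refine Finset.card_pos.2 ⟨idx d j x, (mem_Fs hsub).2 ⟨x, mem_cube_idx j x, hxE, hxc⟩⟩

lemma covNum_le {j : ℕ} {P P' : Set (EuclideanSpace ℝ (Fin d))} (h : P' ⊆ P) :
    covNum d j (E ∩ P') ≤ covNum d j (E ∩ P) := by
  rw [covNum_eq_card hsub, covNum_eq_card hsub]
  apply Finset.card_le_card
  intro m hm
  rcases (mem_Fs hsub).1 hm with ⟨x, hxc, hxE, hxP⟩
  exact (mem_Fs hsub).2 ⟨x, hxc, hxE, h hxP⟩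

end Counting

section Weights

open scoped Classical

variable (d : ℕ) (k : ℕ → ℕ) (E : Set (EuclideanSpace ℝ (Fin d)))

/-- The natural weights on the dyadic cubes at the scales `k m`. -/
def wt : ℕ → (Fin d → ℤ) → ℝ
  | 0, q => (covNum d (k 1) (E ∩ dyadicCube d (k 0) q) : ℝ) / (covNum d (k 1) E : ℝ)
  | (m+1), q => wt m (anc d (k m) (k (m+1)) q) *
      (if (dyadicCube d (k (m+1)) q ∩ E).Nonempty then 1 else 0)
      / (covNum d (k (m+1)) (E ∩ dyadicCube d (k m) (anc d (k m) (k (m+1)) q)) : ℝ)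

/-- The level of a dyadic scale `r` : the `m` with `k m ≤ r < k (m+1)`. -/
def lvl (r : ℕ) : ℕ := sInf {m | r < k (m+1)}

/-- The weight of an arbitrary dyadic cube of scale `r`. -/
def W (r : ℕ) (q : Fin d → ℤ) : ℝ :=
  wt d k E (lvl k r) (anc d (k (lvl k r)) r q)
    * (covNum d (k (lvl k r + 1)) (E ∩ dyadicCube d r q) : ℝ)
    / (covNum d (k (lvl k r + 1))
        (E ∩ dyadicCube d (k (lvl k r)) (anc d (k (lvl k r)) r q)) : ℝ)

variable {d k E}
variable (hsub : E ⊆ {x | ∀ i, 0 ≤ x i ∧ x i ≤ 1})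
  (hk0 : k 0 = 0) (hmono : ∀ m, k m ≤ k (m + 1))
  (hunb : ∀ r : ℕ, ∃ m, r < k (m + 1)) (hne : E.Nonempty)

include hsub hk0 hmono hunb hne

omit hsub hk0 hmono hne in
lemma lvl_lt (r : ℕ) : r < k (lvl k r + 1) :=
  Nat.sInf_mem (hunb r)

omit hsub hmono hunb hne in
lemma lvl_le (r : ℕ) : k (lvl k r) ≤ r := by
  rcases Nat.eq_zero_or_pos (lvl k r) with h | h
  · rw [h, hk0]; exact Nat.zero_le r
  · have hlt : lvl k r - 1 < lvl k r := by omega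
    have := Nat.notMem_of_lt_sInf (s := {m | r < k (m+1)}) hlt
    simp only [Set.mem_setOf_eq, not_lt] at this
    have he : lvl k r - 1 + 1 = lvl k r := by omega
    rwa [he] at this

omit hsub hk0 hmono hunb hne in
lemma wt_nonneg (m : ℕ) (q : Fin d → ℤ) : 0 ≤ wt d k E m q := by
  induction m generalizing q with
  | zero => exact div_nonneg (by positivity) (by positivity)
  | succ m ih =>
      show 0 ≤ wt d k E m _ * _ / _
      have := ih (anc d (k m) (k (m+1)) q)
      positivity

omit hsub hk0 hmono hunb hne in
lemma covNum_zero_of_empty {j r : ℕ} {q : Fin d → ℤ} (h : ¬(dyadicCube d r q ∩ E).Nonempty) :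
    covNum d j (E ∩ dyadicCube d r q) = 0 := by
  have he : {m : Fin d → ℤ | (dyadicCube d j m ∩ (E ∩ dyadicCube d r q)).Nonempty} = ∅ := by
    ext e
    simp only [Set.mem_setOf_eq, Set.mem_empty_iff_false, iff_false]
    rintro ⟨x, -, hxE, hxq⟩
    exact h ⟨x, hxq, hxE⟩
  rw [covNum, he, Set.ncard_empty]

omit hsub hk0 hmono hunb hne in
lemma wt_zero_of_empty {m : ℕ} {q : Fin d → ℤ} (h : ¬(dyadicCube d (k m) q ∩ E).Nonempty) :
    wt d k E m q = 0 := by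
  cases m with
  | zero =>
      show (covNum d (k 1) (E ∩ dyadicCube d (k 0) q) : ℝ) / _ = 0
      rw [covNum_zero_of_empty h]
      simp
  | succ m =>
      show wt d k E m _ * _ / _ = 0
      rw [if_neg h]
      simp

omit hk0 hmono hunb hne in
lemma covNum_total_pos (hne : E.Nonempty) (j : ℕ) : 1 ≤ covNum d j E := by
  rcases hne with ⟨x, hx⟩
  have : covNum d j (E ∩ Set.univ) = (Fs hsub j Set.univ).card := covNum_eq_card hsub j _
  rw [Set.inter_univ] at this
  rw [this]
  exact Finset.card_pos.2 ⟨idx d j x, (mem_Fs hsub).2 ⟨x, mem_cube_idx j x, hx, trivial⟩⟩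

omit hmono hne in
/-- Base case. -/
lemma wt_sum_base (r : ℕ) (q : Fin d → ℤ) :
    ∑ e ∈ Fs hsub (k (lvl k r + 1)) (dyadicCube d r q), wt d k E (lvl k r + 1) e
      = W d k E r q := by
  set m := lvl k r with hm
  set Q := anc d (k m) r q with hQ
  have hkm : k m ≤ r := lvl_le hk0 r
  have hterm : ∀ e ∈ Fs hsub (k (m + 1)) (dyadicCube d r q),
      wt d k E (m+1) e = wt d k E m Q
        / (covNum d (k (m+1)) (E ∩ dyadicCube d (k m) Q) : ℝ) := by
    intro e he
    rcases (mem_Fs hsub).1 he with ⟨x, hxc, hxE, hxq⟩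
    have h1 : anc d (k m) (k (m+1)) e = Q := by
      rw [← idx_anc (le_trans hkm (le_of_lt (lvl_lt hunb r))) hxc, hQ,
        ← idx_anc hkm hxq]
    show wt d k E m _ * _ / _ = _
    rw [h1, if_pos ⟨x, hxc, hxE⟩, mul_one]
  rw [Finset.sum_congr rfl hterm, Finset.sum_const, ← covNum_eq_card hsub]
  show (covNum d (k (m+1)) (E ∩ dyadicCube d r q)) • _ = _
  rw [nsmul_eq_mul, W]
  ring

omit hk0 hunb hne in
/-- Step: pushing a weight sum one level deeper. -/
lemma wt_sum_step (T : ℕ) (P : Set (EuclideanSpace ℝ (Fin d)))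
    (hP : ∀ q : Fin d → ℤ, (dyadicCube d (k T) q ∩ (E ∩ P)).Nonempty →
      dyadicCube d (k T) q ⊆ P) :
    ∑ e ∈ Fs hsub (k (T+1)) P, wt d k E (T+1) e
      = ∑ e ∈ Fs hsub (k T) P, wt d k E T e := by
  rw [sum_group hsub (hmono T) hP]
  apply Finset.sum_congr rfl
  intro q hq
  rcases (mem_Fs hsub).1 hq with ⟨x0, hx0c, hx0E, hx0P⟩
  have hqE : (dyadicCube d (k T) q ∩ E).Nonempty := ⟨x0, hx0c, hx0E⟩
  have hterm : ∀ e ∈ Fs hsub (k (T+1)) (dyadicCube d (k T) q),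
      wt d k E (T+1) e = wt d k E T q
        / (covNum d (k (T+1)) (E ∩ dyadicCube d (k T) q) : ℝ) := by
    intro e he
    rcases (mem_Fs hsub).1 he with ⟨x, hxc, hxE, hxq⟩
    have h1 : anc d (k T) (k (T+1)) e = q := by
      rw [← idx_anc (hmono T) hxc]
      rw [mem_cube_iff] at hxq
      exact hxq
    show wt d k E T _ * _ / _ = _
    rw [h1, if_pos ⟨x, hxc, hxE⟩, mul_one]
  rw [Finset.sum_congr rfl hterm, Finset.sum_const, ← covNum_eq_card hsub]
  have hpos : 1 ≤ covNum d (k (T+1)) (E ∩ dyadicCube d (k T) q) :=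
    covNum_pos hsub (hmono T) hqE
  have hc : ((covNum d (k (T+1)) (E ∩ dyadicCube d (k T) q) : ℕ) : ℝ) ≠ 0 :=
    Nat.cast_ne_zero.2 (by omega)
  rw [nsmul_eq_mul, mul_comm, div_mul_cancel₀ _ hc]

omit hk0 hunb in
lemma wt_total (T : ℕ) :
    ∑ e ∈ Fs hsub (k T) Set.univ, wt d k E T e = 1 := by
  induction T with
  | zero =>
      have hgroup : ((Fs hsub (k 1) Set.univ).card : ℝ)
          = ∑ q ∈ Fs hsub (k 0) Set.univ,
              ((Fs hsub (k 1) (dyadicCube d (k 0) q)).card : ℝ) := by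
        have := sum_group hsub (show k 0 ≤ k 1 from hmono 0) (P := Set.univ)
          (fun _ _ => Set.subset_univ _) (fun _ => (1:ℝ))
        simpa using this
      have htot : (0:ℝ) < (covNum d (k 1) E : ℝ) := by
        have := covNum_total_pos hsub hne (k 1)
        exact_mod_cast Nat.lt_of_lt_of_le Nat.zero_lt_one this
      have hrw : ∑ q ∈ Fs hsub (k 0) Set.univ, wt d k E 0 q
          = (∑ q ∈ Fs hsub (k 0) Set.univ,
              (covNum d (k 1) (E ∩ dyadicCube d (k 0) q) : ℝ)) / (covNum d (k 1) E : ℝ) := by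
        rw [Finset.sum_div]
        rfl
      rw [hrw, div_eq_one_iff_eq htot.ne']
      have hc : ∀ q ∈ Fs hsub (k 0) Set.univ,
          (covNum d (k 1) (E ∩ dyadicCube d (k 0) q) : ℝ)
            = ((Fs hsub (k 1) (dyadicCube d (k 0) q)).card : ℝ) := by
        intro q _
        exact_mod_cast covNum_eq_card hsub (k 1) (dyadicCube d (k 0) q)
      rw [Finset.sum_congr rfl hc]
      have h2 := covNum_eq_card hsub (k 1) Set.univ
      rw [Set.inter_univ] at h2
      rw [show (covNum d (k 1) E : ℝ) = ((Fs hsub (k 1) Set.univ).card : ℝ) by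
        exact_mod_cast h2]
      exact hgroup.symm
  | succ T ih =>
      rw [wt_sum_step hsub hmono T Set.univ (fun _ _ => Set.subset_univ _)]
      exact ih

omit hne in
lemma wt_sum_deep (T : ℕ) (r : ℕ) (q : Fin d → ℤ) (hT : lvl k r + 1 ≤ T) :
    ∑ e ∈ Fs hsub (k T) (dyadicCube d r q), wt d k E T e = W d k E r q := by
  have hkm : Monotone k := monotone_nat_of_le_succ hmono
  induction T, hT using Nat.le_induction with
  | base => exact wt_sum_base hsub hk0 hunb r q
  | succ T hT ih =>
      rw [wt_sum_step hsub hmono T (dyadicCube d r q) ?_]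
      · exact ih
      · rintro q' ⟨x, hx1, -, hx2⟩
        have hrT : r ≤ k T := le_trans (le_of_lt (lvl_lt hunb r)) (hkm hT)
        have heq : q = anc d r (k T) q' := anc_eq_of_inter hrT ⟨x, hx1, hx2⟩
        rw [heq]
        exact cube_subset_anc hrT q'

omit hsub hk0 hmono hunb hne in
lemma W_nonneg (r : ℕ) (q : Fin d → ℤ) : 0 ≤ W d k E r q := by
  have := wt_nonneg (k := k) (E := E) (lvl k r) (anc d (k (lvl k r)) r q)
  unfold W
  positivity

omit hsub hk0 hmono hunb hne in
lemma alg1 {u C : ℝ} (hu0 : 0 ≤ u) (hC : 0 < C) (m r km : ℕ) :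
    C ^ m * ((2:ℝ) ^ (-(km:ℤ))) ^ u * (C * ((2:ℝ) ^ (-(r:ℤ)) / (2:ℝ) ^ (-(km:ℤ))) ^ u)
      = C ^ (m+1) * ((2:ℝ) ^ (-(r:ℤ))) ^ u := by
  have hb : (0:ℝ) < (2:ℝ) ^ (-(km:ℤ)) := by positivity
  have ha : (0:ℝ) ≤ (2:ℝ) ^ (-(r:ℤ)) := by positivity
  have hbu : (0:ℝ) < ((2:ℝ) ^ (-(km:ℤ))) ^ u := Real.rpow_pos_of_pos hb u
  rw [Real.div_rpow ha hb.le, pow_succ]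
  field_simp

section MainBound

variable {u C : ℝ}
variable (hu0 : 0 ≤ u) (hC : 1 ≤ C)
  (hmain : ∀ m : ℕ, ∀ Q : Fin d → ℤ, (dyadicCube d (k m) Q ∩ E).Nonempty →
      ∀ r : ℕ, k m ≤ r → r ≤ k (m + 1) → ∀ q : Fin d → ℤ,
        dyadicCube d r q ⊆ dyadicCube d (k m) Q →
        (covNum d (k (m + 1)) (E ∩ dyadicCube d r q) : ℝ)
          ≤ C * ((2 : ℝ) ^ (-(r : ℤ)) / (2 : ℝ) ^ (-(k m : ℤ))) ^ u
              * (covNum d (k (m + 1)) (E ∩ dyadicCube d (k m) Q) : ℝ))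

include hu0 hC hmain

omit hunb in
lemma wt_le : ∀ m q, wt d k E m q ≤ C ^ m * ((2:ℝ) ^ (-(k m : ℤ))) ^ u := by
  have hC0 : (0:ℝ) < C := lt_of_lt_of_le one_pos hC
  intro m
  induction m with
  | zero =>
      intro q
      have h1 : covNum d (k 1) (E ∩ dyadicCube d (k 0) q) ≤ covNum d (k 1) E := by
        have := covNum_le hsub (j := k 1) (Set.subset_univ (dyadicCube d (k 0) q))
        rwa [Set.inter_univ] at this
      have htot : (0:ℝ) < (covNum d (k 1) E : ℝ) := by
        have := covNum_total_pos hsub hne (k 1)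
        exact_mod_cast Nat.lt_of_lt_of_le Nat.zero_lt_one this
      have hexp : ((2:ℝ) ^ (-(k 0 : ℤ)))^u = 1 := by
        rw [hk0]
        norm_num
      rw [hexp, pow_zero, one_mul]
      show (covNum d (k 1) (E ∩ dyadicCube d (k 0) q) : ℝ) / _ ≤ _
      rw [div_le_one htot]
      exact_mod_cast h1
  | succ m ih =>
      intro q
      by_cases hq : (dyadicCube d (k (m+1)) q ∩ E).Nonempty
      · set Q := anc d (k m) (k (m+1)) q with hQdef
        have hsubQ : dyadicCube d (k (m+1)) q ⊆ dyadicCube d (k m) Q :=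
          cube_subset_anc (hmono m) q
        have hQE : (dyadicCube d (k m) Q ∩ E).Nonempty := by
          rcases hq with ⟨x, hx1, hx2⟩; exact ⟨x, hsubQ hx1, hx2⟩
        have hm := hmain m Q hQE (k (m+1)) (hmono m) le_rfl q hsubQ
        rw [covNum_single, if_pos hq] at hm
        have hcQ : 1 ≤ covNum d (k (m+1)) (E ∩ dyadicCube d (k m) Q) :=
          covNum_pos hsub (hmono m) hQE
        have hcQR : (1:ℝ) ≤ (covNum d (k (m+1)) (E ∩ dyadicCube d (k m) Q) : ℝ) := by
          exact_mod_cast hcQ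
        set cQ : ℝ := (covNum d (k (m+1)) (E ∩ dyadicCube d (k m) Q) : ℝ) with hcQdef
        set ρ : ℝ := C * ((2 : ℝ) ^ (-(k (m+1) : ℤ)) / (2 : ℝ) ^ (-(k m : ℤ))) ^ u with hρ
        have hρ0 : 0 ≤ ρ := by positivity
        have h1ρ : (1:ℝ) ≤ ρ * cQ := by push_cast at hm; linarith
        have hwQ : 0 ≤ wt d k E m Q := wt_nonneg m Q
        show wt d k E m Q * _ / _ ≤ _
        rw [if_pos hq, mul_one, ← hcQdef]
        have step1 : wt d k E m Q / cQ ≤ wt d k E m Q * ρ := by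
          rw [div_le_iff₀ (lt_of_lt_of_le one_pos hcQR)]
          calc wt d k E m Q = wt d k E m Q * 1 := (mul_one _).symm
          _ ≤ wt d k E m Q * (ρ * cQ) := mul_le_mul_of_nonneg_left h1ρ hwQ
          _ = wt d k E m Q * ρ * cQ := by ring
        refine le_trans step1 ?_
        calc wt d k E m Q * ρ ≤ (C ^ m * ((2:ℝ) ^ (-(k m : ℤ))) ^ u) * ρ :=
              mul_le_mul_of_nonneg_right (ih Q) hρ0
        _ = C ^ (m+1) * ((2:ℝ) ^ (-(k (m+1) : ℤ))) ^ u := by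
              rw [hρ]; exact alg1 hu0 hC0 m (k (m+1)) (k m)
      · rw [wt_zero_of_empty hq]
        positivity

lemma W_le (r : ℕ) (q : Fin d → ℤ) :
    W d k E r q ≤ C ^ (lvl k r + 1) * ((2:ℝ) ^ (-(r:ℤ))) ^ u := by
  have hC0 : (0:ℝ) < C := lt_of_lt_of_le one_pos hC
  by_cases hq : (dyadicCube d r q ∩ E).Nonempty
  · set m := lvl k r with hmdef
    set Q := anc d (k m) r q with hQdef
    have hkm : k m ≤ r := lvl_le hk0 r
    have hsubQ : dyadicCube d r q ⊆ dyadicCube d (k m) Q := cube_subset_anc hkm q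
    have hQE : (dyadicCube d (k m) Q ∩ E).Nonempty := by
      rcases hq with ⟨x, hx1, hx2⟩; exact ⟨x, hsubQ hx1, hx2⟩
    have hm := hmain m Q hQE r hkm (le_of_lt (lvl_lt hunb r)) q hsubQ
    have hcQ : 1 ≤ covNum d (k (m+1)) (E ∩ dyadicCube d (k m) Q) :=
      covNum_pos hsub (hmono m) hQE
    have hcQR : (1:ℝ) ≤ (covNum d (k (m+1)) (E ∩ dyadicCube d (k m) Q) : ℝ) := by
      exact_mod_cast hcQ
    set cQ : ℝ := (covNum d (k (m+1)) (E ∩ dyadicCube d (k m) Q) : ℝ) with hcQdef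
    set cq : ℝ := (covNum d (k (m+1)) (E ∩ dyadicCube d r q) : ℝ) with hcqdef
    set ρ : ℝ := C * ((2 : ℝ) ^ (-(r : ℤ)) / (2 : ℝ) ^ (-(k m : ℤ))) ^ u with hρdef
    have hρ0 : 0 ≤ ρ := by positivity
    have hm' : cq ≤ ρ * cQ := hm
    have hwQ : 0 ≤ wt d k E m Q := wt_nonneg m Q
    have hWrw : W d k E r q = wt d k E m Q * cq / cQ := rfl
    rw [hWrw]
    have hdiv : cq / cQ ≤ ρ := by
      rw [div_le_iff₀ (lt_of_lt_of_le one_pos hcQR)]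
      exact hm'
    have step1 : wt d k E m Q * cq / cQ ≤ wt d k E m Q * ρ := by
      rw [mul_div_assoc]
      exact mul_le_mul_of_nonneg_left hdiv hwQ
    refine le_trans step1 ?_
    calc wt d k E m Q * ρ ≤ (C ^ m * ((2:ℝ) ^ (-(k m : ℤ))) ^ u) * ρ :=
          mul_le_mul_of_nonneg_right (wt_le hsub hk0 hmono hne hu0 hC hmain m Q) hρ0
    _ = C ^ (m+1) * ((2:ℝ) ^ (-(r : ℤ))) ^ u := by
          rw [hρdef]; exact alg1 hu0 hC0 m r (k m)
  · rw [W, covNum_zero_of_empty hq]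
    simp only [Nat.cast_zero, mul_zero, zero_div]
    positivity

end MainBound

omit hsub hk0 hmono hunb hne in
lemma sum_biUnion_le' {ι : Type*} [DecidableEq ι] {α : Type*} [DecidableEq α]
    (I : Finset ι) (t : ι → Finset α) (f : α → ℝ) (hf : ∀ a, 0 ≤ f a) :
    ∑ a ∈ I.biUnion t, f a ≤ ∑ j ∈ I, ∑ a ∈ t j, f a := by
  induction I using Finset.induction_on with
  | empty => simp
  | @insert a s ha ih =>
      rw [Finset.biUnion_insert, Finset.sum_insert ha]
      have hui := Finset.sum_union_inter (s₁ := t a) (s₂ := s.biUnion t) (f := f)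
      have h2 : 0 ≤ ∑ x ∈ t a ∩ s.biUnion t, f x := Finset.sum_nonneg fun x _ => hf x
      have h1 : ∑ x ∈ t a ∪ s.biUnion t, f x ≤ ∑ x ∈ t a, f x + ∑ x ∈ s.biUnion t, f x := by
        linarith
      exact le_trans h1 (by linarith [ih])

lemma cover_bound {ι : Type*} [DecidableEq ι] (I : Finset ι) (rr : ι → ℕ) (qq : ι → Fin d → ℤ)
    (hcover : E ⊆ ⋃ j ∈ I, dyadicCube d (rr j) (qq j)) :
    (1:ℝ) ≤ ∑ j ∈ I, W d k E (rr j) (qq j) := by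
  classical
  set T := I.sup (fun j => lvl k (rr j) + 1) with hTdef
  have hTj : ∀ j ∈ I, lvl k (rr j) + 1 ≤ T := fun j hj => Finset.le_sup (f := fun j => lvl k (rr j) + 1) hj
  have hsubset : Fs hsub (k T) Set.univ
      ⊆ I.biUnion (fun j => Fs hsub (k T) (dyadicCube d (rr j) (qq j))) := by
    intro e he
    rcases (mem_Fs hsub).1 he with ⟨x, hxc, hxE, -⟩
    rcases Set.mem_iUnion₂.1 (hcover hxE) with ⟨j, hj, hxj⟩
    exact Finset.mem_biUnion.2 ⟨j, hj, (mem_Fs hsub).2 ⟨x, hxc, hxE, hxj⟩⟩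
  calc (1:ℝ) = ∑ e ∈ Fs hsub (k T) Set.univ, wt d k E T e := (wt_total hsub hmono hne T).symm
  _ ≤ ∑ e ∈ I.biUnion (fun j => Fs hsub (k T) (dyadicCube d (rr j) (qq j))), wt d k E T e :=
      Finset.sum_le_sum_of_subset_of_nonneg hsubset
        (fun e _ _ => wt_nonneg (k := k) (E := E) T e)
  _ ≤ ∑ j ∈ I, ∑ e ∈ Fs hsub (k T) (dyadicCube d (rr j) (qq j)), wt d k E T e :=
      sum_biUnion_le' I _ _ (fun e => wt_nonneg (k := k) (E := E) T e)
  _ = ∑ j ∈ I, W d k E (rr j) (qq j) :=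
      Finset.sum_congr rfl (fun j hj => wt_sum_deep hsub hk0 hmono hunb T (rr j) (qq j) (hTj j hj))

end Weights

section Geometry

variable {d : ℕ}

lemma coord_dist (x y : EuclideanSpace ℝ (Fin d)) (i : Fin d) : |x i - y i| ≤ dist x y := by
  rw [EuclideanSpace.dist_eq, ← Real.sqrt_sq_eq_abs]
  apply Real.sqrt_le_sqrt
  have : |x i - y i| ^ 2 = dist (x i) (y i) ^ 2 := by rw [Real.dist_eq]
  calc (x i - y i) ^ 2 = dist (x i) (y i) ^ 2 := by rw [Real.dist_eq, sq_abs]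
  _ ≤ ∑ j, dist (x j) (y j) ^ 2 :=
      Finset.single_le_sum (f := fun j => dist (x j) (y j) ^ 2)
        (fun j _ => by positivity) (Finset.mem_univ i)

lemma floor_close {a b : ℝ} (h : |a - b| ≤ 1) : |⌊a⌋ - ⌊b⌋| ≤ 1 := by
  rw [abs_le] at h ⊢
  constructor
  · have : b ≤ a + 1 := by linarith
    have h2 : ⌊b⌋ ≤ ⌊a + 1⌋ := Int.floor_le_floor this
    rw [Int.floor_add_one] at h2
    omega
  · have : a ≤ b + 1 := by linarith
    have h2 : ⌊a⌋ ≤ ⌊b + 1⌋ := Int.floor_le_floor this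
    rw [Int.floor_add_one] at h2
    omega

/-- the `3^d` translation vectors. -/
def Vtr (d : ℕ) : Finset (Fin d → ℤ) := Fintype.piFinset (fun _ : Fin d => ({-1,0,1} : Finset ℤ))

lemma card_Vtr : (Vtr d).card = 3 ^ d := by
  rw [Vtr, Fintype.card_piFinset]
  simp

lemma cube_cover (r : ℕ) (x₀ : EuclideanSpace ℝ (Fin d)) (A : Set (EuclideanSpace ℝ (Fin d)))
    (hA : ∀ x ∈ A, ∀ i, |x i - x₀ i| ≤ (2:ℝ) ^ (-(r:ℤ))) :
    A ⊆ ⋃ v ∈ Vtr d, dyadicCube d r (idx d r x₀ + v) := by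
  intro x hx
  have hv : idx d r x - idx d r x₀ ∈ Vtr d := by
    rw [Vtr, Fintype.mem_piFinset]
    intro i
    have h1 : |x i * 2 ^ r - x₀ i * 2 ^ r| ≤ 1 := by
      rw [← sub_mul, abs_mul, abs_of_nonneg (by positivity : (0:ℝ) ≤ (2:ℝ) ^ r)]
      have := hA x hx i
      have h2 : (2:ℝ) ^ (-(r:ℤ)) * 2 ^ r = 1 := by
        rw [neg_zpow_eq]
        field_simp
      calc |x i - x₀ i| * 2 ^ r ≤ (2:ℝ) ^ (-(r:ℤ)) * 2 ^ r :=
            mul_le_mul_of_nonneg_right this (by positivity)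
      _ = 1 := h2
    have h2 := floor_close h1
    have : (idx d r x - idx d r x₀) i = ⌊x i * 2 ^ r⌋ - ⌊x₀ i * 2 ^ r⌋ := rfl
    rw [this]
    rw [abs_le] at h2
    simp only [Finset.mem_insert, Finset.mem_singleton]
    omega
  refine Set.mem_iUnion₂.2 ⟨idx d r x - idx d r x₀, hv, ?_⟩
  have : idx d r x₀ + (idx d r x - idx d r x₀) = idx d r x := by ring
  rw [this]
  exact mem_cube_idx r x

lemma exists_scale {ρ : ℝ} (h0 : 0 < ρ) (h1 : ρ ≤ 1) :
    ∃ r : ℕ, ρ ≤ (2:ℝ) ^ (-(r:ℤ)) ∧ (2:ℝ) ^ (-(r:ℤ)) < 2 * ρ := by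
  have hex : ∃ n : ℕ, (2:ℝ) ^ (-(n:ℤ)) < ρ := by
    rcases exists_pow_lt_of_lt_one h0 (by norm_num : (1:ℝ)/2 < 1) with ⟨n, hn⟩
    refine ⟨n, ?_⟩
    calc (2:ℝ) ^ (-(n:ℤ)) = (1/2) ^ n := by
          rw [neg_zpow_eq]; rw [div_pow, one_pow, one_div]
    _ < ρ := hn
  classical
  set n := Nat.find hex with hn
  have hnlt : (2:ℝ) ^ (-(n:ℤ)) < ρ := Nat.find_spec hex
  have hn0 : n ≠ 0 := by
    intro h
    rw [h] at hnlt
    norm_num at hnlt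
    linarith
  refine ⟨n - 1, ?_, ?_⟩
  · have := Nat.find_min hex (m := n - 1) (by omega)
    push_neg at this
    rwa [hn]
  · have he : (2:ℝ) ^ (-((n-1:ℕ):ℤ)) = 2 * (2:ℝ) ^ (-(n:ℤ)) := by
      have h2 : (-((n-1:ℕ):ℤ)) = 1 + -(n:ℤ) := by omega
      rw [h2, zpow_add₀ (by norm_num : (2:ℝ) ≠ 0), zpow_one]
    rw [he]
    linarith

end Geometry


end Aux13

section Final

variable {d : ℕ}

lemma isClosed_closedCube (j : ℕ) (a : Fin d → ℤ) : IsClosed (closedDyadicCube d j a) := by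
  have he : closedDyadicCube d j a
      = ⋂ i, ((EuclideanSpace.proj i : EuclideanSpace ℝ (Fin d) →L[ℝ] ℝ) ⁻¹'
          Set.Icc ((a i : ℝ) * (2:ℝ) ^ (-(j:ℤ))) (((a i : ℝ) + 1) * (2:ℝ) ^ (-(j:ℤ)))) := by
    ext x
    simp [closedDyadicCube, Set.mem_iInter]
  rw [he]
  exact isClosed_iInter fun i =>
    (isClosed_Icc).preimage (EuclideanSpace.proj i).continuous

lemma unit_cube_compact :
    IsCompact {x : EuclideanSpace ℝ (Fin d) | ∀ i, 0 ≤ x i ∧ x i ≤ 1} := by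
  have hcl : IsClosed {x : EuclideanSpace ℝ (Fin d) | ∀ i, 0 ≤ x i ∧ x i ≤ 1} := by
    have h0 := isClosed_closedCube (d := d) 0 (0 : Fin d → ℤ)
    have he : closedDyadicCube d 0 (0 : Fin d → ℤ)
        = {x : EuclideanSpace ℝ (Fin d) | ∀ i, 0 ≤ x i ∧ x i ≤ 1} := by
      ext x
      simp [closedDyadicCube]
    rwa [he] at h0
  have hbd : Bornology.IsBounded {x : EuclideanSpace ℝ (Fin d) | ∀ i, 0 ≤ x i ∧ x i ≤ 1} := by
    rw [Metric.isBounded_iff]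
    refine ⟨Real.sqrt d, fun x hx y hy => ?_⟩
    rw [EuclideanSpace.dist_eq]
    apply Real.sqrt_le_sqrt
    calc ∑ i, dist (x i) (y i) ^ 2 ≤ ∑ _i : Fin d, (1:ℝ) := by
          apply Finset.sum_le_sum
          intro i _
          have h1 := (hx i).1; have h2 := (hx i).2
          have h3 := (hy i).1; have h4 := (hy i).2
          rw [Real.dist_eq]
          have habs : |x i - y i| ≤ 1 := by rw [abs_le]; constructor <;> linarith
          nlinarith [abs_nonneg (x i - y i)]
    _ = (d : ℝ) := by simp
  exact Metric.isCompact_of_isClosed_isBounded hcl hbd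

lemma add_rpow_le {a b z : ℝ} (ha : 0 ≤ a) (hb : 0 ≤ b) (hz : 0 ≤ z) :
    (a + b) ^ z ≤ 2 ^ z * (a ^ z + b ^ z) := by
  have hmax : a + b ≤ 2 * max a b := by
    rcases le_total a b with h | h
    · rw [max_eq_right h]; linarith
    · rw [max_eq_left h]; linarith
  calc (a + b) ^ z ≤ (2 * max a b) ^ z :=
        Real.rpow_le_rpow (by linarith) hmax hz
  _ = 2 ^ z * (max a b) ^ z := Real.mul_rpow (by norm_num) (le_max_iff.2 (Or.inl ha))
  _ ≤ 2 ^ z * (a ^ z + b ^ z) := by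
      apply mul_le_mul_of_nonneg_left _ (by positivity)
      rcases le_total a b with h | h
      · rw [max_eq_right h]
        have : 0 ≤ a ^ z := Real.rpow_nonneg ha z
        linarith
      · rw [max_eq_left h]
        have : 0 ≤ b ^ z := Real.rpow_nonneg hb z
        linarith

end Final


open Aux13

/-- Lemma 5.5: a Cantor set built along a super-geometrically decaying scale sequence
`δ_m = 2^{-k m}`, in which `E ∩ Q` is a relative `(δ_{m+1}, u, C)`-subset of each dyadic
`δ_m`-cube `Q` meeting `E`, has Hausdorff dimension at least `u`. -/
theorem statement13 (d : ℕ) (hd : 1 ≤ d) (u C : ℝ)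
    (hu0 : 0 ≤ u) (hud : u ≤ (d : ℝ)) (hC : 1 ≤ C)
    (k : ℕ → ℕ) (hk0 : k 0 = 0) (hmono : ∀ m, k m ≤ k (m + 1))
    (hsg : ∀ ε : ℝ, 0 < ε → ∃ M : ℕ, ∀ m, M ≤ m →
      (2 : ℝ) ^ (-(k (m + 1) : ℤ)) ≤ ε * (2 : ℝ) ^ (-(k m : ℤ)))
    (E : Set (EuclideanSpace ℝ (Fin d))) (Em : ℕ → Set (EuclideanSpace ℝ (Fin d)))
    (hE : E = ⋂ m, Em m) (hne : E.Nonempty)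
    (hsub : E ⊆ {x | ∀ i, 0 ≤ x i ∧ x i ≤ 1})
    (hnest : ∀ m, Em (m + 1) ⊆ Em m)
    (hcubes : ∀ m, ∃ S : Set (Fin d → ℤ), S.Finite ∧
      Em m = ⋃ a ∈ S, closedDyadicCube d (k m) a)
    (hmain : ∀ m : ℕ, ∀ Q : Fin d → ℤ, (dyadicCube d (k m) Q ∩ E).Nonempty →
      ∀ r : ℕ, k m ≤ r → r ≤ k (m + 1) → ∀ q : Fin d → ℤ,
        dyadicCube d r q ⊆ dyadicCube d (k m) Q →
        (covNum d (k (m + 1)) (E ∩ dyadicCube d r q) : ℝ)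
          ≤ C * ((2 : ℝ) ^ (-(r : ℤ)) / (2 : ℝ) ^ (-(k m : ℤ))) ^ u
              * (covNum d (k (m + 1)) (E ∩ dyadicCube d (k m) Q) : ℝ)) :
    ENNReal.ofReal u ≤ dimH E := by

  classical
  by_contra hcon
  push_neg at hcon
  obtain ⟨s, hs1, hs2⟩ := ENNReal.lt_iff_exists_nnreal_btwn.1 hcon
  have hμ : μH[((s:ℝ≥0):ℝ)] E = 0 := hausdorffMeasure_of_dimH_lt hs1
  have hsu : (s:ℝ) < u := by
    rw [ENNReal.lt_ofReal_iff_toReal_lt ENNReal.coe_ne_top] at hs2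
    simpa using hs2
  have hspos : (0:ℝ) < (s:ℝ) := by
    have h1 : (0:ℝ≥0∞) < (s:ℝ≥0∞) := lt_of_le_of_lt zero_le hs1
    exact_mod_cast h1
  have hC0 : (0:ℝ) < C := lt_of_lt_of_le one_pos hC
  -- `k` is unbounded
  have hzpow_mono : ∀ a b : ℤ, (2:ℝ) ^ a ≤ (2:ℝ) ^ b → a ≤ b := by
    intro a b hab
    by_contra hh
    push_neg at hh
    exact absurd hab (not_le.2 (zpow_lt_zpow_right₀ (by norm_num : (1:ℝ) < 2) hh))
  have hunb : ∀ r : ℕ, ∃ m, r < k (m + 1) := by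
    obtain ⟨M, hM⟩ := hsg (1/2) (by norm_num)
    have hstep : ∀ m, M ≤ m → k m + 1 ≤ k (m+1) := by
      intro m hm
      have h := hM m hm
      have h2 : (1:ℝ)/2 * (2:ℝ)^(-(k m:ℤ)) = (2:ℝ) ^ (-((k m:ℤ) + 1)) := by
        rw [show (-((k m:ℤ) + 1)) = (-1) + -(k m:ℤ) by ring,
          zpow_add₀ (by norm_num : (2:ℝ) ≠ 0)]
        norm_num
      rw [h2] at h
      have h3 := hzpow_mono _ _ h
      omega
    have hgrow : ∀ i : ℕ, i ≤ k (M + i) := by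
      intro i
      induction i with
      | zero => exact Nat.zero_le _
      | succ i ih =>
          have hs := hstep (M + i) (by omega)
          have h2 : M + (i+1) = (M+i)+1 := rfl
          rw [h2]
          omega
    intro r
    refine ⟨M + r, ?_⟩
    have h := hgrow (r+1)
    have h2 : M + (r+1) = M + r + 1 := rfl
    rw [h2] at h
    omega
  -- the exponent gap
  set ε : ℝ := u - (s:ℝ) with hεdef
  have hε : 0 < ε := by rw [hεdef]; linarith
  set L : ℕ := ⌈Real.logb 2 C / ε⌉₊ + 1 with hLdef
  have hlogL : Real.logb 2 C ≤ (L:ℝ) * ε := by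
    have h1 : Real.logb 2 C / ε ≤ (L:ℝ) := by
      refine le_trans (Nat.le_ceil _) ?_
      rw [hLdef]
      push_cast
      linarith
    calc Real.logb 2 C = (Real.logb 2 C / ε) * ε := by field_simp
    _ ≤ (L:ℝ) * ε := mul_le_mul_of_nonneg_right h1 hε.le
  obtain ⟨M, hM⟩ := hsg ((2:ℝ)^(-(L:ℤ))) (by positivity)
  have hLstep : ∀ m, M ≤ m → k m + L ≤ k (m+1) := by
    intro m hm
    have h := hM m hm
    have h2 : (2:ℝ)^(-(L:ℤ)) * (2:ℝ)^(-(k m:ℤ)) = (2:ℝ)^(-((L:ℤ) + (k m:ℤ))) := by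
      rw [← zpow_add₀ (by norm_num : (2:ℝ) ≠ 0)]
      ring_nf
    rw [h2] at h
    have h3 := hzpow_mono _ _ h
    omega
  have hkgrow : ∀ i : ℕ, i * L ≤ k (M + i) := by
    intro i
    induction i with
    | zero => simp
    | succ i ih =>
        have hs := hLstep (M + i) (by omega)
        have h2 : M + (i+1) = (M+i)+1 := rfl
        rw [h2]
        have : (i+1) * L = i * L + L := by ring
        omega
  set A : ℝ := C^(M+1) with hAdef
  have hA1 : (1:ℝ) ≤ A := one_le_pow₀ hC
  have hA0 : (0:ℝ) < A := lt_of_lt_of_le one_pos hA1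
  -- key bound on weights of arbitrary dyadic cubes
  have hKB : ∀ (r : ℕ) (q : Fin d → ℤ),
      W d k E r q ≤ A * ((2:ℝ)^(-(r:ℤ))) ^ ((s:ℝ≥0):ℝ) := by
    intro r q
    have hW := W_le hsub hk0 hmono hunb hne hu0 hC hmain r q
    set m := lvl k r with hm
    set b : ℝ := (2:ℝ)^(-(r:ℤ)) with hb
    have hb0 : 0 < b := by rw [hb]; positivity
    have hb1 : b ≤ 1 := by
      rw [hb, neg_zpow_eq]
      apply inv_le_one_of_one_le₀
      exact one_le_pow₀ (by norm_num)
    have hbu : b ^ u = b ^ (s:ℝ) * b ^ ε := by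
      rw [← Real.rpow_add hb0, hεdef]
      congr 1
      ring
    have hgoal : C^(m+1) * b ^ u ≤ A * b ^ ((s:ℝ≥0):ℝ) := by
      rcases le_or_gt m M with hmM | hmM
      · have h1 : C^(m+1) ≤ A := by
          rw [hAdef]
          exact pow_le_pow_right₀ hC (by omega)
        have h2 : b ^ ε ≤ 1 := Real.rpow_le_one hb0.le hb1 hε.le
        have h3 : 0 ≤ b ^ (s:ℝ) := Real.rpow_nonneg hb0.le _
        calc C^(m+1) * b^u = C^(m+1) * (b^(s:ℝ) * b^ε) := by rw [hbu]
        _ ≤ A * (b^(s:ℝ) * 1) := by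
            apply mul_le_mul h1 _ (by positivity) hA0.le
            exact mul_le_mul_of_nonneg_left h2 h3
        _ = A * b^((s:ℝ≥0):ℝ) := by ring
      · have hkm_le_r : k m ≤ r := lvl_le hk0 r
        have hkm_ge : (m - M) * L ≤ k m := by
          have h := hkgrow (m - M)
          rw [show M + (m - M) = m by omega] at h
          exact h
        have hfrac : C ^ (m - M) * b ^ ε ≤ 1 := by
          have hClog : C = (2:ℝ) ^ Real.logb 2 C :=
            (Real.rpow_logb two_pos (by norm_num) hC0).symm
          have hcn : C ^ (m - M) = (2:ℝ) ^ (((m - M : ℕ):ℝ) * Real.logb 2 C) := by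
            conv_lhs => rw [hClog]
            rw [← Real.rpow_natCast ((2:ℝ) ^ Real.logb 2 C) (m - M),
              ← Real.rpow_mul (by norm_num), mul_comm]
          have hbe : b ^ ε = (2:ℝ) ^ ((-(r:ℝ)) * ε) := by
            have hbr : b = (2:ℝ) ^ (-(r:ℝ)) := by
              rw [hb, show (-(r:ℝ)) = ((-(r:ℤ) : ℤ) : ℝ) by push_cast; ring,
                Real.rpow_intCast]
            rw [Real.rpow_mul (by norm_num : (0:ℝ) ≤ 2), ← hbr]
          rw [hcn, hbe, ← Real.rpow_add two_pos]
          apply Real.rpow_le_one_of_one_le_of_nonpos (by norm_num)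
          have e1 : ((m-M:ℕ):ℝ) * Real.logb 2 C ≤ ((m-M:ℕ):ℝ) * ((L:ℝ)*ε) :=
            mul_le_mul_of_nonneg_left hlogL (by positivity)
          have e2 : ((m-M:ℕ):ℝ) * ((L:ℝ)*ε) = (((m-M)*L:ℕ):ℝ) * ε := by push_cast; ring
          have e3 : (((m-M)*L:ℕ):ℝ) ≤ (k m:ℝ) := by exact_mod_cast hkm_ge
          have e4 : ((k m:ℕ):ℝ) ≤ (r:ℝ) := by exact_mod_cast hkm_le_r
          have e5 : (((m-M)*L:ℕ):ℝ) * ε ≤ (r:ℝ) * ε :=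
            mul_le_mul_of_nonneg_right (le_trans e3 e4) hε.le
          linarith
        have hsplit : C^(m+1) = A * C^(m - M) := by
          rw [hAdef, ← pow_add]
          congr 1
          omega
        have h3 : 0 ≤ b ^ (s:ℝ) := Real.rpow_nonneg hb0.le _
        calc C^(m+1) * b^u = A * (C^(m-M) * b^ε) * b^(s:ℝ) := by rw [hsplit, hbu]; ring
        _ ≤ A * 1 * b^(s:ℝ) := by
            apply mul_le_mul_of_nonneg_right _ h3
            exact mul_le_mul_of_nonneg_left hfrac hA0.le
        _ = A * b^((s:ℝ≥0):ℝ) := by ring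
    exact le_trans hW hgoal
  -- compactness of E
  have hEclosed : IsClosed E := by
    rw [hE]
    apply isClosed_iInter
    intro m
    obtain ⟨S, hSfin, hSeq⟩ := hcubes m
    rw [hSeq]
    exact hSfin.isClosed_biUnion (fun a _ => isClosed_closedCube (k m) a)
  have hEcomp : IsCompact E :=
    IsCompact.of_isClosed_subset unit_cube_compact hEclosed hsub
  -- constants
  set B : ℝ := (3:ℝ)^d * A * 4 ^ ((s:ℝ≥0):ℝ) with hBdef
  have hB0 : 0 < B := by
    rw [hBdef]
    have h4 : (0:ℝ) < 4 ^ ((s:ℝ≥0):ℝ) := Real.rpow_pos_of_pos (by norm_num) _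
    positivity
  set κ : ℝ := 1 / (4 * B) with hκdef
  have hκ0 : 0 < κ := by rw [hκdef]; positivity
  -- extract a good cover from the vanishing of the Hausdorff measure
  have h0 : (⨅ (t : ℕ → Set (EuclideanSpace ℝ (Fin d))) (_ : E ⊆ ⋃ n, t n)
      (_ : ∀ n, EMetric.diam (t n) ≤ ((1:ℝ≥0∞)/2)),
        ∑' n, ⨆ _ : (t n).Nonempty, EMetric.diam (t n) ^ ((s:ℝ≥0):ℝ)) = 0 := by
    refine le_antisymm ?_ zero_le
    rw [← hμ, Measure.hausdorffMeasure_apply]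
    exact le_iSup₂ (f := fun (r : ℝ≥0∞) (_ : 0 < r) =>
      ⨅ (t : ℕ → Set (EuclideanSpace ℝ (Fin d))) (_ : E ⊆ ⋃ n, t n)
        (_ : ∀ n, EMetric.diam (t n) ≤ r),
        ∑' n, ⨆ _ : (t n).Nonempty, EMetric.diam (t n) ^ ((s:ℝ≥0):ℝ))
      ((1:ℝ≥0∞)/2) (by norm_num)
  have hlt : (⨅ (t : ℕ → Set (EuclideanSpace ℝ (Fin d))) (_ : E ⊆ ⋃ n, t n)
      (_ : ∀ n, EMetric.diam (t n) ≤ ((1:ℝ≥0∞)/2)),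
        ∑' n, ⨆ _ : (t n).Nonempty, EMetric.diam (t n) ^ ((s:ℝ≥0):ℝ))
      < ENNReal.ofReal κ := by
    rw [h0]
    exact ENNReal.ofReal_pos.2 hκ0
  rw [iInf_lt_iff] at hlt
  obtain ⟨t, hlt⟩ := hlt
  rw [iInf_lt_iff] at hlt
  obtain ⟨htcov, hlt⟩ := hlt
  rw [iInf_lt_iff] at hlt
  obtain ⟨htdiam, htsum⟩ := hlt
  -- thickening radii
  set en : ℕ → ℝ := fun n => min ((κ / 2^(n+1)) ^ (1/(s:ℝ))) (1/2) with hendef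
  have hen0 : ∀ n, 0 < en n := fun n =>
    lt_min (Real.rpow_pos_of_pos (by positivity) _) (by norm_num)
  have henhalf : ∀ n, en n ≤ 1/2 := fun n => min_le_right _ _
  have hens : ∀ n, en n ^ ((s:ℝ≥0):ℝ) ≤ κ / 2^(n+1) := by
    intro n
    have h1 : en n ≤ (κ / 2^(n+1)) ^ (1/(s:ℝ)) := min_le_left _ _
    have h2 : en n ^ ((s:ℝ≥0):ℝ) ≤ ((κ / 2^(n+1)) ^ (1/(s:ℝ))) ^ ((s:ℝ≥0):ℝ) :=
      Real.rpow_le_rpow (hen0 n).le h1 hspos.le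
    rwa [← Real.rpow_mul (by positivity), one_div_mul_cancel hspos.ne',
      Real.rpow_one] at h2
  set U : ℕ → Set (EuclideanSpace ℝ (Fin d)) := fun n => Metric.thickening (en n) (t n)
    with hUdef
  have hcovU : E ⊆ ⋃ n, U n := by
    intro x hx
    rcases Set.mem_iUnion.1 (htcov hx) with ⟨n, hn⟩
    exact Set.mem_iUnion.2 ⟨n, Metric.self_subset_thickening (hen0 n) _ hn⟩
  obtain ⟨I, hI⟩ := hEcomp.elim_finite_subcover U (fun n => Metric.isOpen_thickening) hcovU
  set I' : Finset ℕ := I.filter (fun n => (t n).Nonempty) with hI'def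
  have hcovI' : E ⊆ ⋃ n ∈ I', U n := by
    intro x hx
    rcases Set.mem_iUnion₂.1 (hI hx) with ⟨n, hn, hxn⟩
    have htn : (t n).Nonempty := by
      by_contra hemp
      rw [Set.not_nonempty_iff_eq_empty] at hemp
      rw [hUdef] at hxn
      simp only [hemp, Metric.thickening_empty, Set.mem_empty_iff_false] at hxn
    exact Set.mem_iUnion₂.2 ⟨n, Finset.mem_filter.2 ⟨hn, htn⟩, hxn⟩
  -- diameters
  have hediam : ∀ n, EMetric.diam (t n) ≠ ⊤ := fun n =>
    ne_top_of_le_ne_top (by norm_num) (htdiam n)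
  have hbdd : ∀ n, Bornology.IsBounded (t n) := fun n =>
    Metric.isBounded_iff_ediam_ne_top.2 (hediam n)
  have hDb : ∀ n, Metric.diam (t n) ≤ 1/2 := by
    intro n
    have h := htdiam n
    calc Metric.diam (t n) = (EMetric.diam (t n)).toReal := rfl
    _ ≤ ((1:ℝ≥0∞)/2).toReal := ENNReal.toReal_mono (by norm_num) h
    _ = 1/2 := by norm_num
  set ρ : ℕ → ℝ := fun n => Metric.diam (t n) + en n with hρdef
  have hρ0 : ∀ n, 0 < ρ n := fun n =>
    add_pos_of_nonneg_of_pos Metric.diam_nonneg (hen0 n)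
  have hρ1 : ∀ n, ρ n ≤ 1 := by
    intro n
    have h1 := hDb n
    have h2 := henhalf n
    rw [hρdef]
    simp only
    linarith
  have hsc : ∀ n, ∃ r : ℕ, ρ n ≤ (2:ℝ)^(-(r:ℤ)) ∧ (2:ℝ)^(-(r:ℤ)) < 2 * ρ n :=
    fun n => exists_scale (hρ0 n) (hρ1 n)
  choose rad hrad1 hrad2 using hsc
  set pt : ℕ → EuclideanSpace ℝ (Fin d) :=
    fun n => if h : (t n).Nonempty then h.choose else 0 with hptdef
  have hUc : ∀ n ∈ I', U n ⊆ ⋃ v ∈ Vtr d,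
      dyadicCube d (rad n) (idx d (rad n) (pt n) + v) := by
    intro n hn
    obtain ⟨-, htn⟩ := Finset.mem_filter.1 hn
    apply cube_cover
    intro x hx i
    have hpt : pt n ∈ t n := by
      rw [hptdef]
      simp only
      rw [dif_pos htn]
      exact htn.choose_spec
    rcases Metric.mem_thickening_iff.1 hx with ⟨y, hy, hxy⟩
    have hd1 : dist x (pt n) ≤ dist x y + dist y (pt n) := dist_triangle _ _ _
    have hd2 : dist y (pt n) ≤ Metric.diam (t n) :=
      Metric.dist_le_diam_of_mem (hbdd n) hy hpt
    have hcd := coord_dist x (pt n) i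
    calc |x i - pt n i| ≤ dist x (pt n) := hcd
    _ ≤ ρ n := by rw [hρdef]; simp only; linarith
    _ ≤ (2:ℝ)^(-(rad n:ℤ)) := hrad1 n
  -- assemble the dyadic cover and apply the mass bound
  set J : Finset (ℕ × (Fin d → ℤ)) := I' ×ˢ (Vtr d) with hJdef
  set rr : ℕ × (Fin d → ℤ) → ℕ := fun p => rad p.1 with hrrdef
  set qq : ℕ × (Fin d → ℤ) → (Fin d → ℤ) :=
    fun p => idx d (rad p.1) (pt p.1) + p.2 with hqqdef
  have hcover : E ⊆ ⋃ p ∈ J, dyadicCube d (rr p) (qq p) := by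
    intro x hx
    rcases Set.mem_iUnion₂.1 (hcovI' hx) with ⟨n, hn, hxn⟩
    rcases Set.mem_iUnion₂.1 (hUc n hn hxn) with ⟨v, hv, hxv⟩
    exact Set.mem_iUnion₂.2 ⟨(n, v), Finset.mem_product.2 ⟨hn, hv⟩, hxv⟩
  have hmc := cover_bound hsub hk0 hmono hunb hne J rr qq hcover
  -- upper bound on the weight sum
  have hDs : ∑ n ∈ I', Metric.diam (t n) ^ ((s:ℝ≥0):ℝ) ≤ κ := by
    have hterm : ∀ n ∈ I',
        (⨆ _ : (t n).Nonempty, EMetric.diam (t n) ^ ((s:ℝ≥0):ℝ))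
          = EMetric.diam (t n) ^ ((s:ℝ≥0):ℝ) := by
      intro n hn
      obtain ⟨-, htn⟩ := Finset.mem_filter.1 hn
      exact iSup_pos htn
    have hsum1 : ∑ n ∈ I', EMetric.diam (t n) ^ ((s:ℝ≥0):ℝ) ≤ ENNReal.ofReal κ := by
      calc ∑ n ∈ I', EMetric.diam (t n) ^ ((s:ℝ≥0):ℝ)
          = ∑ n ∈ I', ⨆ _ : (t n).Nonempty, EMetric.diam (t n) ^ ((s:ℝ≥0):ℝ) :=
            (Finset.sum_congr rfl hterm).symm
      _ ≤ ∑' n, ⨆ _ : (t n).Nonempty, EMetric.diam (t n) ^ ((s:ℝ≥0):ℝ) :=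
            ENNReal.sum_le_tsum I'
      _ ≤ ENNReal.ofReal κ := htsum.le
    have hne_top : ∀ n ∈ I', EMetric.diam (t n) ^ ((s:ℝ≥0):ℝ) ≠ ⊤ := fun n _ =>
      ENNReal.rpow_ne_top_of_nonneg hspos.le (hediam n)
    calc ∑ n ∈ I', Metric.diam (t n) ^ ((s:ℝ≥0):ℝ)
        = ∑ n ∈ I', (EMetric.diam (t n) ^ ((s:ℝ≥0):ℝ)).toReal := by
          apply Finset.sum_congr rfl
          intro n _
          rw [← ENNReal.toReal_rpow]
          rfl
    _ = (∑ n ∈ I', EMetric.diam (t n) ^ ((s:ℝ≥0):ℝ)).toReal :=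
          (ENNReal.toReal_sum hne_top).symm
    _ ≤ (ENNReal.ofReal κ).toReal := ENNReal.toReal_mono ENNReal.ofReal_ne_top hsum1
    _ = κ := ENNReal.toReal_ofReal hκ0.le
  have hes : ∑ n ∈ I', en n ^ ((s:ℝ≥0):ℝ) ≤ κ := by
    have h1 : ∑ n ∈ I', en n ^ ((s:ℝ≥0):ℝ) ≤ ∑ n ∈ I', κ / 2^(n+1) :=
      Finset.sum_le_sum (fun n _ => hens n)
    have h2 : ∑ n ∈ I', κ / 2^(n+1) ≤ κ := by
      have h3 : ∑ n ∈ I', κ / 2^(n+1) = κ * ∑ n ∈ I', (1/2:ℝ)^(n+1) := by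
        rw [Finset.mul_sum]
        apply Finset.sum_congr rfl
        intro n _
        rw [div_pow, one_pow]
        ring
      rw [h3]
      have h4 : ∑ n ∈ I', (1/2:ℝ)^(n+1) ≤ 1 := by
        set N := I'.sup id + 1 with hN
        have hsubN : I' ⊆ Finset.range N := by
          intro n hn
          rw [Finset.mem_range, hN]
          have hle : n ≤ I'.sup id := Finset.le_sup (f := id) hn
          omega
        calc ∑ n ∈ I', (1/2:ℝ)^(n+1)
            ≤ ∑ n ∈ Finset.range N, (1/2:ℝ)^(n+1) :=
              Finset.sum_le_sum_of_subset_of_nonneg hsubN (fun n _ _ => by positivity)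
        _ = (1/2) * ∑ n ∈ Finset.range N, (1/2:ℝ)^n := by
              rw [Finset.mul_sum]
              apply Finset.sum_congr rfl
              intro n _
              ring
        _ ≤ (1/2) * 2 := by
              have := sum_geometric_two_le N
              linarith
        _ = 1 := by norm_num
      calc κ * ∑ n ∈ I', (1/2:ℝ)^(n+1) ≤ κ * 1 :=
            mul_le_mul_of_nonneg_left h4 hκ0.le
      _ = κ := mul_one κ
    linarith
  have hup : ∑ p ∈ J, W d k E (rr p) (qq p) ≤ B * (κ + κ) := by
    calc ∑ p ∈ J, W d k E (rr p) (qq p)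
        ≤ ∑ p ∈ J, A * ((2:ℝ)^(-(rr p:ℤ))) ^ ((s:ℝ≥0):ℝ) :=
          Finset.sum_le_sum (fun p _ => hKB (rr p) (qq p))
    _ = ∑ n ∈ I', ∑ v ∈ Vtr d, A * ((2:ℝ)^(-(rad n:ℤ))) ^ ((s:ℝ≥0):ℝ) := by
          rw [hJdef, Finset.sum_product]
    _ = ∑ n ∈ I', (3:ℝ)^d * (A * ((2:ℝ)^(-(rad n:ℤ))) ^ ((s:ℝ≥0):ℝ)) := by
          apply Finset.sum_congr rfl
          intro n _
          rw [Finset.sum_const, card_Vtr, nsmul_eq_mul]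
          push_cast
          ring
    _ ≤ ∑ n ∈ I', B * (Metric.diam (t n) ^ ((s:ℝ≥0):ℝ) + en n ^ ((s:ℝ≥0):ℝ)) := by
          apply Finset.sum_le_sum
          intro n _
          have hr2 : ((2:ℝ)^(-(rad n:ℤ))) ^ ((s:ℝ≥0):ℝ) ≤ (2 * ρ n) ^ ((s:ℝ≥0):ℝ) :=
            Real.rpow_le_rpow (by positivity) (hrad2 n).le hspos.le
          have hr3 : (2 * ρ n) ^ ((s:ℝ≥0):ℝ)
              = 2 ^ ((s:ℝ≥0):ℝ) * ρ n ^ ((s:ℝ≥0):ℝ) :=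
            Real.mul_rpow (by norm_num) (hρ0 n).le
          have hr4 : ρ n ^ ((s:ℝ≥0):ℝ)
              ≤ 2 ^ ((s:ℝ≥0):ℝ) * (Metric.diam (t n) ^ ((s:ℝ≥0):ℝ) + en n ^ ((s:ℝ≥0):ℝ)) := by
            rw [hρdef]
            exact add_rpow_le Metric.diam_nonneg (hen0 n).le hspos.le
          have h2s : (0:ℝ) < 2 ^ ((s:ℝ≥0):ℝ) := Real.rpow_pos_of_pos (by norm_num) _
          have h44 : (2:ℝ) ^ ((s:ℝ≥0):ℝ) * 2 ^ ((s:ℝ≥0):ℝ) = 4 ^ ((s:ℝ≥0):ℝ) := by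
            rw [← Real.mul_rpow (by norm_num) (by norm_num)]
            norm_num
          have h3d : (0:ℝ) ≤ (3:ℝ)^d := by positivity
          calc (3:ℝ)^d * (A * ((2:ℝ)^(-(rad n:ℤ))) ^ ((s:ℝ≥0):ℝ))
              ≤ (3:ℝ)^d * (A * ((2 * ρ n) ^ ((s:ℝ≥0):ℝ))) := by
                apply mul_le_mul_of_nonneg_left _ h3d
                exact mul_le_mul_of_nonneg_left hr2 hA0.le
          _ = (3:ℝ)^d * (A * (2 ^ ((s:ℝ≥0):ℝ) * ρ n ^ ((s:ℝ≥0):ℝ))) := by rw [hr3]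
          _ ≤ (3:ℝ)^d * (A * (2 ^ ((s:ℝ≥0):ℝ) * (2 ^ ((s:ℝ≥0):ℝ)
                * (Metric.diam (t n) ^ ((s:ℝ≥0):ℝ) + en n ^ ((s:ℝ≥0):ℝ))))) := by
                apply mul_le_mul_of_nonneg_left _ h3d
                apply mul_le_mul_of_nonneg_left _ hA0.le
                exact mul_le_mul_of_nonneg_left hr4 h2s.le
          _ = B * (Metric.diam (t n) ^ ((s:ℝ≥0):ℝ) + en n ^ ((s:ℝ≥0):ℝ)) := by
                rw [hBdef, ← h44]; ring
    _ = B * ∑ n ∈ I', (Metric.diam (t n) ^ ((s:ℝ≥0):ℝ) + en n ^ ((s:ℝ≥0):ℝ)) := by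
          rw [Finset.mul_sum]
    _ = B * ((∑ n ∈ I', Metric.diam (t n) ^ ((s:ℝ≥0):ℝ)) + ∑ n ∈ I', en n ^ ((s:ℝ≥0):ℝ)) := by
          rw [Finset.sum_add_distrib]
    _ ≤ B * (κ + κ) := by
          apply mul_le_mul_of_nonneg_left _ hB0.le
          exact add_le_add hDs hes
  have hfin : B * (κ + κ) = 1/2 := by
    rw [hκdef]
    field_simp
    ring
  rw [hfin] at hup
  linarith
end
end

section
/- There exist absolute constants C, c > 0 such that for every sufficiently large N ∈ ℕ and every interval I ⊆ [0,1] with |I| ≥ C·(log N)/N, the set F_N := {p/q : p,q ∈ ℕ, 0 ≤ p ≤ q ≤ N} satisfies: F_N ∩ I contains an N^{−2}-separated subset of cardinality at least c·|I|·N², and the minimal number of intervals of length N^{−2} needed to cover F_N ∩ I is at most C·|I|·N². -/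
open MeasureTheory Metric Set
open scoped ENNReal NNReal

noncomputable section

/-- The Farey fractions `F_N = {p/q : p,q ∈ ℕ, 0 ≤ p ≤ q ≤ N}` (with `q ≥ 1`). -/
def fareySet (N : ℕ) : Set ℝ :=
  {x | ∃ p q : ℕ, p ≤ q ∧ q ≤ N ∧ 1 ≤ q ∧ x = (p : ℝ) / (q : ℝ)}

private lemma sum_inv_sq_le (N : ℕ) : ∑ g ∈ Finset.Icc 17 N, ((g:ℝ)^2)⁻¹ ≤ 16⁻¹ := by
  have key : ∀ M : ℕ, 16 ≤ M → ∑ g ∈ Finset.Icc 17 M, ((g:ℝ)^2)⁻¹ ≤ 16⁻¹ - (M:ℝ)⁻¹ := by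
    intro M hM
    induction M, hM using Nat.le_induction with
    | base => rw [Finset.Icc_eq_empty (by omega)]; norm_num
    | succ n hn ih =>
      rw [Finset.sum_Icc_succ_top (by omega)]
      have hn0 : (0:ℝ) < n := by exact_mod_cast Nat.pos_of_ne_zero (by omega)
      have h1 : (0:ℝ) < (n:ℝ) + 1 := by linarith
      have : ((n:ℝ)+1)⁻¹ + (((n:ℝ)+1)^2)⁻¹ ≤ (n:ℝ)⁻¹ := by
        have e1 : ((n:ℝ)+1)⁻¹ = ((n:ℝ)+1)/((n:ℝ)+1)^2 := by field_simp
        have e2 : (((n:ℝ)+1)^2)⁻¹ = 1/((n:ℝ)+1)^2 := by field_simp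
        rw [e1, e2, ← add_div, div_le_iff₀ (by positivity), inv_mul_eq_div,
          le_div_iff₀ hn0]
        ring_nf
        nlinarith
      push_cast
      linarith
  rcases le_or_gt N 16 with h | h
  · rw [Finset.Icc_eq_empty (by omega)]; norm_num
  · have := key N (by omega)
    have hN0 : (0:ℝ) < N := by exact_mod_cast Nat.pos_of_ne_zero (by omega)
    have := inv_pos.mpr hN0
    linarith

private lemma sum_inv_le (N : ℕ) : ∑ g ∈ Finset.Icc 17 N, ((g:ℝ))⁻¹ ≤ 1 + Real.log N := by
  have h1 : ∑ g ∈ Finset.Icc 17 N, ((g:ℝ))⁻¹ ≤ ∑ g ∈ Finset.Icc 1 N, ((g:ℝ))⁻¹ :=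
    Finset.sum_le_sum_of_subset_of_nonneg (Finset.Icc_subset_Icc_left (by norm_num))
      (by intros; positivity)
  have h2 : ∑ g ∈ Finset.Icc 1 N, ((g:ℝ))⁻¹ = (harmonic N : ℝ) := by
    rw [harmonic]
    push_cast
    rw [show Finset.Icc 1 N = Finset.Ico 1 (N+1) by rfl, Finset.sum_Ico_eq_sum_range]
    simp [add_comm]
  calc _ ≤ _ := h1
    _ = _ := h2
    _ ≤ _ := harmonic_le_one_add_log N

private lemma farey_sep {N : ℕ} {x y : ℝ} (hx : x ∈ fareySet N) (hy : y ∈ fareySet N)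
    (hxy : x ≠ y) : ((N : ℝ) ^ 2)⁻¹ ≤ |x - y| := by
  obtain ⟨p, q, -, hqN, hq1, rfl⟩ := hx
  obtain ⟨p', q', -, hq'N, hq'1, rfl⟩ := hy
  have hq0 : (0:ℝ) < q := by exact_mod_cast hq1
  have hq'0 : (0:ℝ) < q' := by exact_mod_cast hq'1
  have hN0 : (0:ℝ) < N := by
    have : 1 ≤ N := le_trans hq1 hqN
    exact_mod_cast this
  set n : ℤ := (p:ℤ) * q' - (p':ℤ) * q with hn
  have hdiff : (p:ℝ)/q - (p':ℝ)/q' = ((n:ℤ):ℝ) / ((q:ℝ) * q') := by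
    rw [hn]
    push_cast
    field_simp
  have hne : n ≠ 0 := by
    intro h0
    apply hxy
    rw [div_eq_div_iff (ne_of_gt hq0) (ne_of_gt hq'0)]
    have : ((p:ℤ) * q' : ℤ) = (p':ℤ) * q := by omega
    exact_mod_cast this
  have h1 : (1:ℝ) ≤ |(n:ℝ)| := by
    rw [← Int.cast_abs]
    exact_mod_cast Int.one_le_abs (by exact_mod_cast hne)
  have hqq : (q:ℝ) * q' ≤ (N:ℝ)^2 := by
    have hA : (q:ℝ) ≤ N := by exact_mod_cast hqN
    have hB : (q':ℝ) ≤ N := by exact_mod_cast hq'N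
    nlinarith
  rw [hdiff, abs_div, abs_of_pos (mul_pos hq0 hq'0)]
  calc ((N:ℝ)^2)⁻¹ ≤ ((q:ℝ)*q')⁻¹ := by
        apply inv_anti₀ (by positivity) hqq
    _ ≤ |((n:ℤ):ℝ)| / ((q:ℝ)*q') := by
        rw [le_div_iff₀ (mul_pos hq0 hq'0), inv_mul_eq_div, div_le_iff₀ (mul_pos hq0 hq'0)]
        nlinarith [mul_pos hq0 hq'0, h1]

set_option maxHeartbeats 2000000

theorem statement16 :
    ∃ C c : ℝ, 0 < C ∧ 0 < c ∧ ∃ N₀ : ℕ, ∀ N : ℕ, N₀ ≤ N →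
      ∀ a b : ℝ, Set.Icc a b ⊆ Set.Icc (0 : ℝ) 1 →
        C * Real.log N / N ≤ b - a →
        (∃ S : Finset ℝ, ↑S ⊆ fareySet N ∩ Set.Icc a b ∧
          (∀ x ∈ S, ∀ y ∈ S, x ≠ y → ((N : ℝ) ^ 2)⁻¹ ≤ |x - y|) ∧
          c * (b - a) * (N : ℝ) ^ 2 ≤ (S.card : ℝ)) ∧
        (∃ G : Finset ℝ,
          (fareySet N ∩ Set.Icc a b ⊆ ⋃ x ∈ G, Set.Icc x (x + ((N : ℝ) ^ 2)⁻¹)) ∧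
          (G.card : ℝ) ≤ C * (b - a) * (N : ℝ) ^ 2) := by
  classical
  refine ⟨200, 1/1000, by norm_num, by norm_num, 3, ?_⟩
  intro N hN a b hsub hlen
  -- basic facts
  have hN3 : (3:ℝ) ≤ N := by exact_mod_cast hN
  have hNpos : (0:ℝ) < N := by linarith
  have hlog : 1 ≤ Real.log N := by
    rw [Real.le_log_iff_exp_le hNpos]
    have := Real.exp_one_lt_d9
    linarith
  set L : ℝ := b - a with hLdef
  have hLN : 200 * Real.log N ≤ L * N := by
    have := (div_le_iff₀ hNpos).mp hlen
    linarith
  have hLN200 : 200 ≤ L * N := by nlinarith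
  have hLpos : 0 < L := by nlinarith
  have hab : a ≤ b := by linarith
  have ha0 : 0 ≤ a := (hsub ⟨le_refl a, hab⟩).1
  have hb1 : b ≤ 1 := (hsub ⟨hab, le_refl b⟩).2
  have hL1 : L ≤ 1 := by simp only [hLdef]; linarith
  constructor
  · -- LOWER BOUND
    set M : ℕ := N / 2 with hMdef
    set Qs : Finset ℕ := Finset.Ioc M N with hQdef
    set lo : ℕ → ℕ := fun q => ⌈a * q⌉₊ with hlodef
    set hi : ℕ → ℕ := fun q => ⌊b * q⌋₊ with hhidef
    set P : Finset ((_ : ℕ) × ℕ) := Qs.sigma (fun q => Finset.Icc (lo q) (hi q)) with hPdef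
    set P' : Finset ((_ : ℕ) × ℕ) := P.filter (fun z => Nat.gcd z.2 z.1 ≤ 16) with hP'def
    set v : ((_ : ℕ) × ℕ) → ℝ := fun z => (z.2 : ℝ) / (z.1 : ℝ) with hvdef
    set S : Finset ℝ := P'.image v with hSdef
    -- facts about q ∈ Qs
    have hq_half : ∀ q ∈ Qs, (N:ℝ) < 2*q ∧ (q:ℝ) ≤ N ∧ 1 ≤ q := by
      intro q hq
      rw [hQdef, Finset.mem_Ioc] at hq
      refine ⟨?_, by exact_mod_cast hq.2, by omega⟩
      have h2 : N < 2 * q := by omega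
      exact_mod_cast h2
    -- bounds within a fiber
    have hmem_bounds : ∀ z ∈ P, a * z.1 ≤ (z.2:ℝ) ∧ (z.2:ℝ) ≤ b * z.1 := by
      intro z hz
      rw [hPdef, Finset.mem_sigma, Finset.mem_Icc] at hz
      constructor
      · exact_mod_cast Nat.ceil_le.mp hz.2.1
      · calc (z.2:ℝ) ≤ (⌊b * z.1⌋₊ : ℝ) := by exact_mod_cast hz.2.2
          _ ≤ b * z.1 := Nat.floor_le (mul_nonneg (le_trans ha0 hab) (Nat.cast_nonneg _))
    -- per-q cardinality lower bound
    have hlohi : ∀ q ∈ Qs, (lo q ≤ hi q) ∧ (L * N / 4 ≤ ((Finset.Icc (lo q) (hi q)).card : ℝ)) := by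
      intro q hq
      obtain ⟨hq1, hq2, hq3⟩ := hq_half q hq
      have hq0 : (0:ℝ) ≤ q := Nat.cast_nonneg q
      have hLq : 100 ≤ L * q := by nlinarith
      have hhi : b * q - 1 < (hi q : ℝ) := Nat.sub_one_lt_floor _
      have hlo' : (lo q : ℝ) < a * q + 1 := Nat.ceil_lt_add_one (by positivity)
      have hle : lo q ≤ hi q := Nat.ceil_le.mpr (by nlinarith)
      refine ⟨hle, ?_⟩
      have hcast : ((Finset.Icc (lo q) (hi q)).card : ℝ) = (hi q : ℝ) + 1 - lo q := by
        rw [Nat.card_Icc]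
        have h9 : lo q ≤ hi q + 1 := by omega
        push_cast [h9]
        ring
      rw [hcast]
      nlinarith
    -- lower bound on P.card
    have hPcard : L * N^2 / 8 ≤ (P.card : ℝ) := by
      have hsum : P.card = ∑ q ∈ Qs, (Finset.Icc (lo q) (hi q)).card := Finset.card_sigma _ _
      have hQcard : (N:ℝ)/2 ≤ (Qs.card : ℝ) := by
        rw [hQdef, Nat.card_Ioc]
        have h1 : N ≤ 2 * (N - M) := by omega
        have : (N:ℝ) ≤ 2 * ((N - M : ℕ) : ℝ) := by exact_mod_cast h1
        linarith
      have h2 : (Qs.card : ℝ) * (L * N / 4) ≤ (P.card : ℝ) := by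
        rw [hsum]
        push_cast
        calc (Qs.card : ℝ) * (L*N/4) = ∑ _q ∈ Qs, L*N/4 := by
              rw [Finset.sum_const, nsmul_eq_mul]
          _ ≤ ∑ q ∈ Qs, ((Finset.Icc (lo q) (hi q)).card : ℝ) :=
              Finset.sum_le_sum (fun q hq => (hlohi q hq).2)
      have hLN4 : 0 ≤ L * N / 4 := by positivity
      nlinarith
    -- bad pairs
    set B : Finset ((_:ℕ)×ℕ) := P.filter (fun z => ¬ Nat.gcd z.2 z.1 ≤ 16) with hBdef
    have hsplit : P'.card + B.card = P.card :=
      Finset.card_filter_add_card_filter_not _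
    have hBcard : (B.card : ℝ) ≤ L * N^2 / 16 + 2*N*(1 + Real.log N) := by
      have hsubB : B ⊆ (Finset.Icc 17 N).biUnion
          (fun g => P.filter (fun z => Nat.gcd z.2 z.1 = g)) := by
        intro z hz
        rw [hBdef, Finset.mem_filter] at hz
        obtain ⟨hzP, hg⟩ := hz
        rw [Finset.mem_biUnion]
        refine ⟨Nat.gcd z.2 z.1, Finset.mem_Icc.mpr ⟨by omega, ?_⟩,
          Finset.mem_filter.mpr ⟨hzP, rfl⟩⟩
        have hz1 : z.1 ∈ Qs := (Finset.mem_sigma.mp hzP).1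
        have h1 : 1 ≤ z.1 := (hq_half z.1 hz1).2.2
        have h2 : z.1 ≤ N := (Finset.mem_Ioc.mp (by rwa [hQdef] at hz1)).2
        calc Nat.gcd z.2 z.1 ≤ z.1 := Nat.le_of_dvd (by omega) (Nat.gcd_dvd_right _ _)
          _ ≤ N := h2
      have hper : ∀ g ∈ Finset.Icc 17 N, ((P.filter (fun z => Nat.gcd z.2 z.1 = g)).card : ℝ)
          ≤ L * N^2 * ((g:ℝ)^2)⁻¹ + 2*N*((g:ℝ))⁻¹ := by
        intro g hg
        rw [Finset.mem_Icc] at hg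
        have hg17 : 17 ≤ g := hg.1
        have hgpos : (0:ℝ) < g := by
          have : 0 < g := by omega
          exact_mod_cast this
        have hsub2 : P.filter (fun z => Nat.gcd z.2 z.1 = g) ⊆
            (Qs.filter (fun q => g ∣ q)).sigma
              (fun q => (Finset.Icc (lo q) (hi q)).filter (fun m => g ∣ m)) := by
          intro z hz
          rw [Finset.mem_filter] at hz
          obtain ⟨hzP, hgcd⟩ := hz
          rw [hPdef, Finset.mem_sigma] at hzP
          rw [Finset.mem_sigma]
          exact ⟨Finset.mem_filter.mpr ⟨hzP.1, hgcd ▸ Nat.gcd_dvd_right _ _⟩,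
            Finset.mem_filter.mpr ⟨hzP.2, hgcd ▸ Nat.gcd_dvd_left _ _⟩⟩
        have hcard2 := Finset.card_le_card hsub2
        rw [Finset.card_sigma] at hcard2
        have hinner : ∀ q ∈ Qs.filter (fun q => g ∣ q),
            (((Finset.Icc (lo q) (hi q)).filter (fun m => g ∣ m)).card : ℝ) ≤ L * N / g + 2 := by
          intro q hq
          rw [Finset.mem_filter] at hq
          obtain ⟨hqQ, -⟩ := hq
          obtain ⟨hle, -⟩ := hlohi q hqQ
          obtain ⟨hqh, hqN, hq1⟩ := hq_half q hqQ
          have hinj : ((Finset.Icc (lo q) (hi q)).filter (fun m => g ∣ m)).card ≤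
              (Finset.Icc (lo q / g) (hi q / g)).card := by
            apply Finset.card_le_card_of_injOn (fun m => m / g)
            · intro m hm
              rw [Finset.mem_coe, Finset.mem_filter, Finset.mem_Icc] at hm
              exact Finset.mem_Icc.mpr
                ⟨Nat.div_le_div_right hm.1.1, Nat.div_le_div_right hm.1.2⟩
            · intro m hm m' hm' hmm
              simp only [Finset.coe_filter, Set.mem_setOf_eq, Finset.mem_Icc] at hm hm'
              obtain ⟨-, hdm⟩ := hm; obtain ⟨-, hdm'⟩ := hm'
              have e1 : g * (m / g) = m := Nat.mul_div_cancel' hdm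
              have e2 : g * (m' / g) = m' := Nat.mul_div_cancel' hdm'
              simp only at hmm
              rw [← e1, ← e2, hmm]
          have hmono : lo q / g ≤ hi q / g := Nat.div_le_div_right hle
          have hcast : ((Finset.Icc (lo q / g) (hi q / g)).card : ℝ)
              = ((hi q / g : ℕ):ℝ) + 1 - ((lo q / g : ℕ):ℝ) := by
            rw [Nat.card_Icc]
            have h9 : lo q / g ≤ hi q / g + 1 := by omega
            push_cast [h9]
            ring
          have hup : ((hi q / g : ℕ):ℝ) ≤ (hi q : ℝ) / g := Nat.cast_div_le
          have hlow : (lo q : ℝ)/g - 1 ≤ ((lo q / g : ℕ):ℝ) := by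
            have h3 : lo q < g * (lo q / g) + g := by
              have e5 := Nat.div_add_mod (lo q) g
              have e6 := Nat.mod_lt (lo q) (show 0 < g by omega)
              omega
            have h4 : (lo q : ℝ) < g * ((lo q / g : ℕ):ℝ) + g := by exact_mod_cast h3
            rw [sub_le_iff_le_add, div_le_iff₀ hgpos]
            nlinarith
          have hhiq : (hi q : ℝ) ≤ b * q :=
            Nat.floor_le (mul_nonneg (le_trans ha0 hab) (Nat.cast_nonneg _))
          have hloq : a * q ≤ (lo q : ℝ) := Nat.le_ceil _
          have hfin : (hi q : ℝ)/g - (lo q : ℝ)/g ≤ L * N / g := by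
            rw [div_sub_div_same, div_le_div_iff₀ hgpos hgpos]
            have : (hi q : ℝ) - lo q ≤ L * N := by nlinarith
            nlinarith
          calc (((Finset.Icc (lo q) (hi q)).filter (fun m => g ∣ m)).card : ℝ)
              ≤ ((Finset.Icc (lo q / g) (hi q / g)).card : ℝ) := by exact_mod_cast hinj
            _ = ((hi q / g : ℕ):ℝ) + 1 - ((lo q / g : ℕ):ℝ) := hcast
            _ ≤ (hi q : ℝ)/g + 1 - ((lo q : ℝ)/g - 1) := by linarith
            _ ≤ L * N / g + 2 := by linarith
        have houter : ((Qs.filter (fun q => g ∣ q)).card : ℝ) ≤ (N:ℝ)/g := by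
          have hsub3 : Qs.filter (fun q => g ∣ q) ⊆ (Finset.Ioc 0 N).filter (fun q => g ∣ q) :=
            Finset.monotone_filter_left _ (by rw [hQdef]; exact Finset.Ioc_subset_Ioc_left (Nat.zero_le M))
          have h7 := Finset.card_le_card hsub3
          rw [Nat.Ioc_filter_dvd_card_eq_div] at h7
          calc ((Qs.filter (fun q => g ∣ q)).card : ℝ) ≤ ((N / g : ℕ) : ℝ) := by exact_mod_cast h7
            _ ≤ (N:ℝ)/g := Nat.cast_div_le
        have hnn : (0:ℝ) ≤ L * N / g + 2 := by positivity
        calc ((P.filter (fun z => Nat.gcd z.2 z.1 = g)).card : ℝ)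
            ≤ ∑ q ∈ Qs.filter (fun q => g ∣ q),
                (((Finset.Icc (lo q) (hi q)).filter (fun m => g ∣ m)).card : ℝ) := by
              exact_mod_cast hcard2
          _ ≤ ∑ _q ∈ Qs.filter (fun q => g ∣ q), (L * N / g + 2) :=
              Finset.sum_le_sum hinner
          _ = ((Qs.filter (fun q => g ∣ q)).card : ℝ) * (L * N / g + 2) := by
              rw [Finset.sum_const, nsmul_eq_mul]
          _ ≤ (N:ℝ)/g * (L * N / g + 2) := mul_le_mul_of_nonneg_right houter hnn
          _ = L * N^2 * ((g:ℝ)^2)⁻¹ + 2*N*((g:ℝ))⁻¹ := by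
              field_simp
      calc (B.card : ℝ)
          ≤ (((Finset.Icc 17 N).biUnion (fun g => P.filter (fun z => Nat.gcd z.2 z.1 = g))).card : ℝ) := by
            exact_mod_cast Finset.card_le_card hsubB
        _ ≤ ∑ g ∈ Finset.Icc 17 N, ((P.filter (fun z => Nat.gcd z.2 z.1 = g)).card : ℝ) := by
            exact_mod_cast Finset.card_biUnion_le
        _ ≤ ∑ g ∈ Finset.Icc 17 N, (L * N^2 * ((g:ℝ)^2)⁻¹ + 2*N*((g:ℝ))⁻¹) :=
            Finset.sum_le_sum hper
        _ = L * N^2 * (∑ g ∈ Finset.Icc 17 N, ((g:ℝ)^2)⁻¹)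
            + 2*N * (∑ g ∈ Finset.Icc 17 N, ((g:ℝ))⁻¹) := by
            rw [Finset.sum_add_distrib, Finset.mul_sum, Finset.mul_sum]
        _ ≤ L * N^2 / 16 + 2*N*(1 + Real.log N) := by
            have s1 := sum_inv_sq_le N
            have s2 := sum_inv_le N
            have p1 : (0:ℝ) ≤ L * N^2 := by positivity
            have p2 : (0:ℝ) ≤ 2*N := by positivity
            have m1 := mul_le_mul_of_nonneg_left s1 p1
            have m2 := mul_le_mul_of_nonneg_left s2 p2
            linarith
    -- fiber bound: each value is attained by at most 31 pairs of P'
    have hfiber : P'.card ≤ 31 * S.card := by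
      rw [hSdef]
      apply Finset.card_le_mul_card_image
      intro x hx
      obtain ⟨z₀, hz₀, hvz₀⟩ := Finset.mem_image.mp hx
      rw [hP'def, Finset.mem_filter] at hz₀
      obtain ⟨hz₀P, hgle⟩ := hz₀
      have hz₀Q : z₀.1 ∈ Qs := (Finset.mem_sigma.mp (by rwa [hPdef] at hz₀P)).1
      obtain ⟨hq₀h, hq₀N, hq₀1⟩ := hq_half z₀.1 hz₀Q
      have hq₀pos : 0 < z₀.1 := hq₀1
      have hgpos : 0 < Nat.gcd z₀.2 z₀.1 := Nat.gcd_pos_of_pos_right _ hq₀pos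
      set g := Nat.gcd z₀.2 z₀.1 with hgdef
      set d := z₀.1 / g with hddef
      set e := z₀.2 / g with hedef
      have hgd : g * d = z₀.1 := Nat.mul_div_cancel' (Nat.gcd_dvd_right _ _)
      have hge : g * e = z₀.2 := Nat.mul_div_cancel' (Nat.gcd_dvd_left _ _)
      have hdpos : 0 < d := by
        rcases Nat.eq_zero_or_pos d with h | h
        · rw [h, Nat.mul_zero] at hgd; omega
        · exact h
      have hcop : Nat.Coprime e d := Nat.coprime_div_gcd_div_gcd hgpos
      have hNd : N < 32 * d := by
        have h32 : z₀.1 ≤ 16 * d := by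
          calc z₀.1 = g * d := hgd.symm
            _ ≤ 16 * d := Nat.mul_le_mul_right _ hgle
        have h32' : (z₀.1 : ℝ) ≤ 16 * d := by exact_mod_cast h32
        have : (N:ℝ) < 32 * d := by linarith
        exact_mod_cast this
      have key : ∀ z ∈ P'.filter (fun z => v z = x),
          z.2 * z₀.1 = z₀.2 * z.1 ∧ d ∣ z.1 ∧ 1 ≤ z.1 := by
        intro z hz
        rw [Finset.mem_filter] at hz
        obtain ⟨hzP', hvz⟩ := hz
        have hzP : z ∈ P := (Finset.mem_filter.mp (by rwa [hP'def] at hzP')).1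
        have hz1Q : z.1 ∈ Qs := (Finset.mem_sigma.mp (by rwa [hPdef] at hzP)).1
        have hz1pos : 1 ≤ z.1 := (hq_half _ hz1Q).2.2
        have hz1posR : (0:ℝ) < z.1 := by exact_mod_cast hz1pos
        have hq₀posR : (0:ℝ) < z₀.1 := by exact_mod_cast hq₀pos
        have h1 : (z.2:ℝ)/z.1 = (z₀.2:ℝ)/z₀.1 := by
          rw [hvdef] at hvz hvz₀
          simp only at hvz hvz₀
          rw [hvz, ← hvz₀]
        have heq : (z.2:ℝ) * z₀.1 = (z₀.2:ℝ) * z.1 :=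
          (div_eq_div_iff (ne_of_gt hz1posR) (ne_of_gt hq₀posR)).mp h1
        have heqn : z.2 * z₀.1 = z₀.2 * z.1 := by exact_mod_cast heq
        refine ⟨heqn, ?_, hz1pos⟩
        have h2 : g * (z.2 * d) = g * (e * z.1) := by
          calc g*(z.2*d) = z.2*(g*d) := by ring
            _ = z.2 * z₀.1 := by rw [hgd]
            _ = z₀.2 * z.1 := heqn
            _ = (g*e)*z.1 := by rw [hge]
            _ = g*(e*z.1) := by ring
        have h3 : z.2 * d = e * z.1 := Nat.eq_of_mul_eq_mul_left hgpos h2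
        have h4 : d ∣ e * z.1 := ⟨z.2, by rw [← h3, Nat.mul_comm]⟩
        exact Nat.Coprime.dvd_of_dvd_mul_left hcop.symm h4
      calc (P'.filter (fun z => v z = x)).card ≤ (Finset.Icc 1 31).card := by
            apply Finset.card_le_card_of_injOn (fun z => z.1 / d)
            · intro z hz
              obtain ⟨heqn, hdvd, hz1pos⟩ := key z hz
              have hzP : z ∈ P := (Finset.mem_filter.mp
                (by rw [hP'def] at hz; exact (Finset.mem_filter.mp hz).1)).1
              have hz1Q : z.1 ∈ Qs := (Finset.mem_sigma.mp (by rwa [hPdef] at hzP)).1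
              have hz1N : z.1 ≤ N := (Finset.mem_Ioc.mp (by rwa [hQdef] at hz1Q)).2
              have e4 : d * (z.1/d) = z.1 := Nat.mul_div_cancel' hdvd
              rw [Finset.mem_coe, Finset.mem_Icc]
              constructor
              · exact (Nat.one_le_div_iff hdpos).mpr (Nat.le_of_dvd (by omega) hdvd)
              · by_contra hgt
                push_neg at hgt
                have h8 : d * 32 ≤ d * (z.1/d) := Nat.mul_le_mul_left d (by omega)
                omega
            · intro z hz z' hz' hff
              obtain ⟨heqn, hdvd, -⟩ := key z (Finset.mem_coe.mp hz)
              obtain ⟨heqn', hdvd', -⟩ := key z' (Finset.mem_coe.mp hz')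
              have e4 : d * (z.1/d) = z.1 := Nat.mul_div_cancel' hdvd
              have e4' : d * (z'.1/d) = z'.1 := Nat.mul_div_cancel' hdvd'
              simp only at hff
              have h5 : z.1 = z'.1 := by rw [← e4, ← e4', hff]
              have h6 : z.2 = z'.2 := by
                have h7 : z.2 * z₀.1 = z'.2 * z₀.1 := by rw [heqn, h5, ← heqn']
                exact Nat.eq_of_mul_eq_mul_right hq₀pos h7
              exact Sigma.ext h5 (heq_of_eq h6)
          _ = 31 := by simp
    -- subset fact
    have hSsub : ↑S ⊆ fareySet N ∩ Set.Icc a b := by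
      intro x hx
      obtain ⟨z, hz, rfl⟩ := Finset.mem_image.mp (by rwa [hSdef] at hx)
      have hzP : z ∈ P := (Finset.mem_filter.mp (by rwa [hP'def] at hz)).1
      have hz1Q : z.1 ∈ Qs := (Finset.mem_sigma.mp (by rwa [hPdef] at hzP)).1
      obtain ⟨hh, hNr, h1⟩ := hq_half z.1 hz1Q
      obtain ⟨hA, hB2⟩ := hmem_bounds z hzP
      have hz1pos : (0:ℝ) < z.1 := by
        have : (1:ℝ) ≤ z.1 := by exact_mod_cast h1
        linarith
      have hz1N : z.1 ≤ N := (Finset.mem_Ioc.mp (by rwa [hQdef] at hz1Q)).2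
      constructor
      · refine ⟨z.2, z.1, ?_, hz1N, h1, rfl⟩
        have h9 : (z.2:ℝ) ≤ z.1 := le_trans hB2 (by nlinarith)
        exact_mod_cast h9
      · constructor
        · rw [hvdef]
          simp only
          rw [le_div_iff₀ hz1pos]
          linarith
        · rw [hvdef]
          simp only
          rw [div_le_iff₀ hz1pos]
          linarith
    refine ⟨S, hSsub, ?_, ?_⟩
    · intro x hx y hy hxy
      exact farey_sep (hSsub (Finset.mem_coe.mpr hx)).1 (hSsub (Finset.mem_coe.mpr hy)).1 hxy
    · have h31 : (P'.card:ℝ) ≤ 31 * S.card := by exact_mod_cast hfiber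
      have hsplitR : (P'.card:ℝ) + B.card = P.card := by exact_mod_cast hsplit
      have hlogN : 2*N*(1+Real.log N) ≤ L*N^2/50 := by
        have h10 : N*(200 * Real.log N) ≤ N*(L*N) :=
          mul_le_mul_of_nonneg_left hLN hNpos.le
        nlinarith
      have hfinal : L * N^2 / 1000 ≤ (S.card : ℝ) := by linarith
      calc 1/1000 * L * (N:ℝ)^2 = L * N^2/1000 := by ring
        _ ≤ _ := hfinal
  · -- COVERING
    set K : ℕ := ⌊L * N^2⌋₊ + 1 with hKdef
    refine ⟨(Finset.range K).image (fun k : ℕ => a + (k:ℝ) * ((N:ℝ)^2)⁻¹), ?_, ?_⟩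
    · rintro x ⟨-, hxa, hxb⟩
      have hk : ⌊(x - a) * N^2⌋₊ < K := by
        rw [hKdef, Nat.lt_succ_iff]
        apply Nat.floor_le_floor
        nlinarith
      refine Set.mem_iUnion.mpr ⟨a + (⌊(x - a) * N^2⌋₊:ℝ) * ((N:ℝ)^2)⁻¹, ?_⟩
      refine Set.mem_iUnion.mpr ⟨Finset.mem_image.mpr ⟨_, Finset.mem_range.mpr hk, rfl⟩, ?_⟩
      set k : ℕ := ⌊(x - a) * N^2⌋₊ with hk2
      have h1 : (k : ℝ) ≤ (x - a) * N^2 := Nat.floor_le (by nlinarith)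
      have h2 : (x - a) * N^2 < (k:ℝ) + 1 := Nat.lt_floor_add_one _
      have hN2 : (0:ℝ) < (N:ℝ)^2 := by positivity
      have hinv : (0:ℝ) < ((N:ℝ)^2)⁻¹ := inv_pos.mpr hN2
      have e : ((N:ℝ)^2)⁻¹ * (N:ℝ)^2 = 1 := inv_mul_cancel₀ (ne_of_gt hN2)
      constructor
      · nlinarith [mul_le_mul_of_nonneg_right h1 hinv.le]
      · nlinarith [mul_le_mul_of_nonneg_right h2.le hinv.le]
    · calc ((Finset.range K).image (fun k : ℕ => a + (k:ℝ) * ((N:ℝ)^2)⁻¹)).card ≤ (K:ℝ) := by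
            exact_mod_cast le_trans Finset.card_image_le (le_of_eq (Finset.card_range K))
        _ ≤ L * N^2 + 2 := by
            have := Nat.floor_le (show (0:ℝ) ≤ L * N^2 by positivity)
            rw [hKdef]
            push_cast
            linarith
        _ ≤ 200 * L * N^2 := by nlinarith
        _ = 200 * (b - a) * N^2 := by rw [hLdef]
end
end

section
/- Every compact t-Ahlfors regular set K ⊆ ℝ^d with t > 0 is sub-uniformly distributed. -/
open MeasureTheory Metric Set
open scoped ENNReal NNReal

noncomputable section

/-- A bounded set `K ⊆ ℝ^d` is sub-uniformly distributed if there is `C > 0` with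
`|K|_R · |K ∩ Q|_r ≤ C·|K|_r` for all dyadic scales `r = 2^{-k} ≤ R = 2^{-j}` and every dyadic
`R`-cube `Q` intersecting `K`. -/
def SubUniformlyDistributed {d : ℕ} (K : Set (EuclideanSpace ℝ (Fin d))) : Prop :=
  Bornology.IsBounded K ∧ ∃ C : ℝ, 0 < C ∧ ∀ j k : ℕ, j ≤ k → ∀ m : Fin d → ℤ,
    (dyadicCube d j m ∩ K).Nonempty →
    (covNum d j K : ℝ) * (covNum d k (K ∩ dyadicCube d j m) : ℝ)
      ≤ C * (covNum d k K : ℝ)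

/-- A compact set `K ⊆ ℝ^d` is `t`-Ahlfors regular: there are a Borel measure `μ` with support
`K` (here: `μ` vanishes outside `K` and obeys the lower bound on `K`) and constants
`0 < c ≤ C < ∞` such that `c·r^t ≤ μ(B(x,r)) ≤ C·r^t` for all `x ∈ K` and `0 < r ≤ diam K`. -/
def AhlforsRegular {d : ℕ} (t : ℝ) (K : Set (EuclideanSpace ℝ (Fin d))) : Prop :=
  ∃ (μ : Measure (EuclideanSpace ℝ (Fin d))) (c C : ℝ), 0 < c ∧ c ≤ C ∧
    μ Kᶜ = 0 ∧
    ∀ x ∈ K, ∀ r : ℝ, 0 < r → r ≤ Metric.diam K →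
      ENNReal.ofReal (c * r ^ t) ≤ μ (Metric.closedBall x r) ∧
      μ (Metric.closedBall x r) ≤ ENNReal.ofReal (C * r ^ t)

/-!
For nontrivial `K` the Ahlfors measure `μ` is finite and carried by `K`, and after shrinking `c`
it satisfies `c ρ^t ≤ μ(B(x, ρ))` for all `ρ ≤ 1` and `μ(B(x, ρ)) ≤ C ρ^t` for all `ρ > 0`; a
singleton `K` is trivially sub-uniformly distributed. Covering numbers are compared with `μ` in
both directions. A ball of radius `r` centred in an `r`-cube lies in the `3^d` cubes adjacent to
it, so balls centred at points of `P` in distinct `r`-cubes overlap at most `3^d` times and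
`|P|_r · c r^t ≤ 3^d μ(T)` whenever they lie in `T`. The `r`-cubes meeting `K` cover it and have
diameter `√d r`, so `μ(K) ≤ |K|_r · C (√d + 1)^t r^t`. Packing `K` at scale `R`, packing `K ∩ Q`
at scale `r` inside a single ball of radius `(√d + 1) R`, and covering `K` at scale `r` give
`|K|_R · |K ∩ Q|_r · c² R^t r^t ≤ 9^d C² (√d + 1)^{2t} R^t r^t · |K|_r`.
-/

variable {d k : ℕ}

def dyadicIndex (d k : ℕ) (x : EuclideanSpace ℝ (Fin d)) : Fin d → ℤ :=
  fun i => ⌊x i / 2 ^ (-(k : ℤ))⌋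

lemma mem_dyadicCube_iff {x : EuclideanSpace ℝ (Fin d)} {m : Fin d → ℤ} :
    x ∈ dyadicCube d k m ↔ dyadicIndex d k x = m := by
  have hr : (0 : ℝ) < 2 ^ (-(k : ℤ)) := by positivity
  simp only [dyadicCube, mem_ofPred_eq, funext_iff, dyadicIndex, Int.floor_eq_iff,
    le_div_iff₀ hr, div_lt_iff₀ hr]

lemma mem_dyadicCube_dyadicIndex (x : EuclideanSpace ℝ (Fin d)) :
    x ∈ dyadicCube d k (dyadicIndex d k x) :=
  mem_dyadicCube_iff.mpr rfl

lemma covNum_eq_ncard_image (P : Set (EuclideanSpace ℝ (Fin d))) :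
    covNum d k P = (dyadicIndex d k '' P).ncard := by
  rw [covNum]
  congr 1
  ext m
  simp only [mem_ofPred_eq, Set.Nonempty, mem_inter_iff, mem_dyadicCube_iff, mem_image,
    and_comm]

lemma finite_image_dyadicIndex {P : Set (EuclideanSpace ℝ (Fin d))}
    (hP : Bornology.IsBounded P) : (dyadicIndex d k '' P).Finite := by
  obtain ⟨ρ, hρ⟩ := hP.subset_closedBall 0
  refine (Set.Finite.pi fun _ =>
    Set.finite_Icc ⌊-ρ / 2 ^ (-(k : ℤ))⌋ ⌊ρ / 2 ^ (-(k : ℤ))⌋).subset ?_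
  rintro _ ⟨x, hx, rfl⟩ i -
  have hxi : |x i| ≤ ρ := (PiLp.norm_apply_le x i).trans (mem_closedBall_zero_iff.mp (hρ hx))
  exact ⟨Int.floor_mono (by gcongr; exact neg_le_of_abs_le hxi),
    Int.floor_mono (by gcongr; exact le_of_abs_le hxi)⟩

lemma covNum_eq_card_toFinset {P : Set (EuclideanSpace ℝ (Fin d))}
    (hP : Bornology.IsBounded P) :
    covNum d k P = (finite_image_dyadicIndex (k := k) hP).toFinset.card := by
  rw [covNum_eq_ncard_image, Set.ncard_eq_toFinset_card _ (finite_image_dyadicIndex hP)]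

lemma covNum_le_one_of_subsingleton {P : Set (EuclideanSpace ℝ (Fin d))}
    (hP : P.Subsingleton) : covNum d k P ≤ 1 := by
  rw [covNum_eq_ncard_image]
  exact (Set.ncard_le_one (hP.image _).finite).mpr (hP.image _)

lemma covNum_mono {P Q : Set (EuclideanSpace ℝ (Fin d))} (hPQ : P ⊆ Q)
    (hQ : Bornology.IsBounded Q) : covNum d k P ≤ covNum d k Q := by
  simp only [covNum_eq_ncard_image]
  exact Set.ncard_le_ncard (image_mono hPQ) (finite_image_dyadicIndex hQ)

lemma dist_le_of_mem_dyadicCube {m : Fin d → ℤ} {x y : EuclideanSpace ℝ (Fin d)}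
    (hx : x ∈ dyadicCube d k m) (hy : y ∈ dyadicCube d k m) :
    dist x y ≤ √d * 2 ^ (-(k : ℤ)) := by
  have hr : (0 : ℝ) < 2 ^ (-(k : ℤ)) := by positivity
  have hcoord : ∀ i, dist (x i) (y i) ≤ 2 ^ (-(k : ℤ)) := by
    intro i
    obtain ⟨hx₁, hx₂⟩ := hx i
    obtain ⟨hy₁, hy₂⟩ := hy i
    rw [Real.dist_eq, abs_le]
    constructor <;> linarith
  calc dist x y = √(∑ i, dist (x i) (y i) ^ 2) := EuclideanSpace.dist_eq x y
    _ ≤ √(∑ _i : Fin d, (2 ^ (-(k : ℤ)) : ℝ) ^ 2) := by gcongr with i; exact hcoord i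
    _ = √d * 2 ^ (-(k : ℤ)) := by
      rw [Finset.sum_const, Finset.card_univ, Fintype.card_fin, nsmul_eq_mul,
        Real.sqrt_mul (Nat.cast_nonneg d), Real.sqrt_sq hr.le]

lemma dyadicCube_subset_closedBall {m : Fin d → ℤ} {x : EuclideanSpace ℝ (Fin d)}
    (hx : x ∈ dyadicCube d k m) : dyadicCube d k m ⊆ closedBall x (√d * 2 ^ (-(k : ℤ))) :=
  fun _ hy => mem_closedBall.mpr (dist_le_of_mem_dyadicCube hy hx)

def adjacentOffsets (d : ℕ) : Finset (Fin d → ℤ) :=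
  Fintype.piFinset fun _ => Finset.Icc (-1) 1

lemma card_adjacentOffsets : (adjacentOffsets d).card = 3 ^ d := by
  simp [adjacentOffsets, Fintype.card_piFinset]

lemma abs_floor_sub_floor_le_one {α : Type*} [Ring α] [LinearOrder α] [IsStrictOrderedRing α]
    [FloorRing α] {a b : α} (h : |a - b| ≤ 1) : |⌊a⌋ - ⌊b⌋| ≤ 1 := by
  obtain ⟨hlo, hhi⟩ := abs_le.mp h
  rw [abs_le]
  have h₁ : ⌊b⌋ - 1 ≤ ⌊a⌋ := by
    rw [← Int.floor_sub_one]
    exact Int.floor_mono (sub_le_iff_le_add.mpr (neg_le_sub_iff_le_add.mp hlo))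
  have h₂ : ⌊a⌋ ≤ ⌊b⌋ + 1 := by
    rw [← Int.floor_add_one]
    exact Int.floor_mono (sub_le_iff_le_add'.mp hhi)
  omega

lemma closedBall_subset_iUnion_adjacent {n : Fin d → ℤ} {x : EuclideanSpace ℝ (Fin d)}
    (hx : x ∈ dyadicCube d k n) :
    closedBall x (2 ^ (-(k : ℤ))) ⊆ ⋃ e ∈ adjacentOffsets d, dyadicCube d k (n + e) := by
  have hr : (0 : ℝ) < 2 ^ (-(k : ℤ)) := by positivity
  obtain rfl := mem_dyadicCube_iff.mp hx
  intro y hy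
  refine mem_iUnion₂.mpr ⟨dyadicIndex d k y - dyadicIndex d k x, ?_, ?_⟩
  · refine Fintype.mem_piFinset.mpr fun i => Finset.mem_Icc.mpr (abs_le.mp ?_)
    refine abs_floor_sub_floor_le_one ?_
    rw [← sub_div, abs_div, abs_of_pos hr, div_le_one hr, ← Real.dist_eq]
    exact (PiLp.dist_apply_le y x i).trans (mem_closedBall.mp hy)
  · rw [add_sub_cancel]
    exact mem_dyadicCube_dyadicIndex y

section Measure

lemma measurable_dyadicIndex : Measurable (dyadicIndex d k) :=
  measurable_pi_lambda _ fun _ => (by fun_prop : Measurable _).floor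

lemma measurableSet_dyadicCube (m : Fin d → ℤ) : MeasurableSet (dyadicCube d k m) := by
  have : dyadicCube d k m = dyadicIndex d k ⁻¹' {m} := by
    ext x
    exact mem_dyadicCube_iff
  rw [this]
  exact measurable_dyadicIndex (measurableSet_singleton m)

variable (μ : Measure (EuclideanSpace ℝ (Fin d))) [IsFiniteMeasure μ]

lemma sum_measureReal_dyadicCube_inter_le {ι : Type*} (F : Finset ι) {g : ι → Fin d → ℤ}
    (hg : Function.Injective g) {T : Set (EuclideanSpace ℝ (Fin d))} (hT : MeasurableSet T) :
    ∑ n ∈ F, μ.real (dyadicCube d k (g n) ∩ T) ≤ μ.real T := by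
  rw [← measureReal_biUnion_finset]
  · exact measureReal_mono (iUnion₂_subset fun _ _ => inter_subset_right)
  · intro n _ n' _ hne
    refine Disjoint.mono inter_subset_left inter_subset_left ?_
    refine Set.disjoint_left.mpr fun x hx hx' => hne (hg ?_)
    exact (mem_dyadicCube_iff.mp hx).symm.trans (mem_dyadicCube_iff.mp hx')
  · exact fun n _ => (measurableSet_dyadicCube (g n)).inter hT

lemma covNum_mul_le_measureReal {P T : Set (EuclideanSpace ℝ (Fin d))}
    (hP : Bornology.IsBounded P) (hT : MeasurableSet T) {a : ℝ}
    (ha : ∀ x ∈ P, a ≤ μ.real (closedBall x (2 ^ (-(k : ℤ)))))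
    (hPT : ∀ x ∈ P, closedBall x (2 ^ (-(k : ℤ))) ⊆ T) :
    covNum d k P * a ≤ 3 ^ d * μ.real T := by
  have hfin := finite_image_dyadicIndex (k := k) hP
  have hball : ∀ n ∈ hfin.toFinset,
      a ≤ ∑ e ∈ adjacentOffsets d, μ.real (dyadicCube d k (n + e) ∩ T) := by
    intro n hn
    obtain ⟨x, hxP, rfl⟩ := hfin.mem_toFinset.mp hn
    have hsub : closedBall x (2 ^ (-(k : ℤ))) ⊆
        ⋃ e ∈ adjacentOffsets d, dyadicCube d k (dyadicIndex d k x + e) ∩ T := fun y hy => by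
      obtain ⟨e, he, hye⟩ :=
        mem_iUnion₂.mp (closedBall_subset_iUnion_adjacent (mem_dyadicCube_dyadicIndex x) hy)
      exact mem_iUnion₂.mpr ⟨e, he, hye, hPT x hxP hy⟩
    exact (ha x hxP).trans <|
      (measureReal_mono hsub (measure_ne_top _ _)).trans (measureReal_biUnion_finset_le _ _)
  calc (covNum d k P : ℝ) * a = ∑ _n ∈ hfin.toFinset, a := by
        rw [covNum_eq_card_toFinset hP, Finset.sum_const, nsmul_eq_mul]
    _ ≤ ∑ n ∈ hfin.toFinset, ∑ e ∈ adjacentOffsets d,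
          μ.real (dyadicCube d k (n + e) ∩ T) := Finset.sum_le_sum hball
    _ = ∑ e ∈ adjacentOffsets d, ∑ n ∈ hfin.toFinset,
          μ.real (dyadicCube d k (n + e) ∩ T) := Finset.sum_comm
    _ ≤ ∑ _e ∈ adjacentOffsets d, μ.real T := Finset.sum_le_sum fun e _ =>
        sum_measureReal_dyadicCube_inter_le μ _ (add_left_injective e) hT
    _ = 3 ^ d * μ.real T := by
        rw [Finset.sum_const, card_adjacentOffsets, nsmul_eq_mul, Nat.cast_pow, Nat.cast_ofNat]

lemma covNum_inter_dyadicCube_mul_le {j : ℕ} (hjk : j ≤ k) {m : Fin d → ℤ}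
    {P : Set (EuclideanSpace ℝ (Fin d))} (hP : Bornology.IsBounded P)
    {x₀ : EuclideanSpace ℝ (Fin d)} (hx₀ : x₀ ∈ dyadicCube d j m) {a : ℝ}
    (ha : ∀ x ∈ P ∩ dyadicCube d j m, a ≤ μ.real (closedBall x (2 ^ (-(k : ℤ))))) :
    covNum d k (P ∩ dyadicCube d j m) * a ≤
      3 ^ d * μ.real (closedBall x₀ ((√d + 1) * 2 ^ (-(j : ℤ)))) := by
  have hrR : (2 : ℝ) ^ (-(k : ℤ)) ≤ 2 ^ (-(j : ℤ)) :=
    zpow_le_zpow_right₀ one_le_two (by omega)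
  refine covNum_mul_le_measureReal μ (hP.subset inter_subset_left) measurableSet_closedBall ha
    fun x hx y hy => ?_
  have := dist_le_of_mem_dyadicCube hx.2 hx₀
  rw [mem_closedBall] at hy ⊢
  linarith [dist_triangle y x x₀]

lemma measureReal_le_covNum_mul {P : Set (EuclideanSpace ℝ (Fin d))}
    (hP : Bornology.IsBounded P) {s b : ℝ} (hs : √d * 2 ^ (-(k : ℤ)) ≤ s)
    (hb : ∀ x ∈ P, μ.real (closedBall x s) ≤ b) :
    μ.real P ≤ covNum d k P * b := by
  have hfin := finite_image_dyadicIndex (k := k) hP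
  have hcover : P ⊆ ⋃ n ∈ hfin.toFinset, dyadicCube d k n := fun x hx =>
    mem_iUnion₂.mpr ⟨_, hfin.mem_toFinset.mpr (mem_image_of_mem _ hx),
      mem_dyadicCube_dyadicIndex x⟩
  calc μ.real P ≤ ∑ n ∈ hfin.toFinset, μ.real (dyadicCube d k n) :=
        (measureReal_mono hcover (measure_ne_top _ _)).trans (measureReal_biUnion_finset_le _ _)
    _ ≤ ∑ _n ∈ hfin.toFinset, b := by
        refine Finset.sum_le_sum fun n hn => ?_
        obtain ⟨x, hxP, rfl⟩ := hfin.mem_toFinset.mp hn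
        refine le_trans (measureReal_mono ?_) (hb x hxP)
        exact (dyadicCube_subset_closedBall (mem_dyadicCube_dyadicIndex x)).trans
          (closedBall_subset_closedBall hs)
    _ = covNum d k P * b := by
        rw [covNum_eq_card_toFinset hP, Finset.sum_const, nsmul_eq_mul]

end Measure

lemma subUniformlyDistributed_of_subsingleton {K : Set (EuclideanSpace ℝ (Fin d))}
    (hK : K.Subsingleton) : SubUniformlyDistributed K := by
  refine ⟨hK.finite.isBounded, 1, one_pos, fun j k _ m _ => ?_⟩
  have hj : (covNum d j K : ℝ) ≤ 1 := by exact_mod_cast covNum_le_one_of_subsingleton hK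
  have hk : (covNum d k (K ∩ dyadicCube d j m) : ℝ) ≤ covNum d k K := by
    exact_mod_cast covNum_mono inter_subset_left hK.finite.isBounded
  exact mul_le_mul hj hk (Nat.cast_nonneg _) zero_le_one

theorem subUniformlyDistributed_of_measure_bounds {K : Set (EuclideanSpace ℝ (Fin d))}
    (hK : Bornology.IsBounded K) (μ : Measure (EuclideanSpace ℝ (Fin d))) [IsFiniteMeasure μ]
    (hμK : μ Kᶜ = 0) {t c C : ℝ} (hc : 0 < c) (hC : 0 < C)
    (hlow : ∀ x ∈ K, ∀ ρ, 0 < ρ → ρ ≤ 1 → c * ρ ^ t ≤ μ.real (closedBall x ρ))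
    (hup : ∀ x ∈ K, ∀ ρ, 0 < ρ → μ.real (closedBall x ρ) ≤ C * ρ ^ t) :
    SubUniformlyDistributed K := by
  set C' := C * (√d + 1) ^ t
  refine ⟨hK, (3 ^ d * C' / c) ^ 2, by positivity, ?_⟩
  intro j k hjk m ⟨x₀, hx₀Q, hx₀K⟩
  set R : ℝ := 2 ^ (-(j : ℤ))
  set r : ℝ := 2 ^ (-(k : ℤ))
  have hR : 0 < R := by positivity
  have hr : 0 < r := by positivity
  have hR1 : R ≤ 1 := zpow_le_one_of_nonpos₀ one_le_two (by omega)
  have hr1 : r ≤ 1 := zpow_le_one_of_nonpos₀ one_le_two (by omega)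
  have hupC' : ∀ x ∈ K, ∀ s, 0 < s →
      μ.real (closedBall x ((√d + 1) * s)) ≤ C' * s ^ t :=
    fun x hx s hs => (hup x hx _ (by positivity)).trans_eq (by
      rw [Real.mul_rpow (by positivity) hs.le]; ring)
  have e1 : covNum d j K * (c * R ^ t) ≤ 3 ^ d * μ.real univ :=
    covNum_mul_le_measureReal μ hK MeasurableSet.univ (fun x hx => hlow x hx R hR hR1)
      fun _ _ => subset_univ _
  have e2 : covNum d k (K ∩ dyadicCube d j m) * (c * r ^ t) ≤ 3 ^ d * (C' * R ^ t) :=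
    (covNum_inter_dyadicCube_mul_le μ hjk hK hx₀Q
      fun x hx => hlow x hx.1 r hr hr1).trans (by gcongr; exact hupC' x₀ hx₀K R hR)
  have e3 : μ.real univ ≤ covNum d k K * (C' * r ^ t) := by
    rw [← measureReal_congr (ae_eq_univ.mpr hμK)]
    exact measureReal_le_covNum_mul μ hK (by linarith) fun x hx => hupC' x hx r hr
  calc (covNum d j K : ℝ) * covNum d k (K ∩ dyadicCube d j m)
      = covNum d j K * (c * R ^ t) * (covNum d k (K ∩ dyadicCube d j m) * (c * r ^ t)) /
          (c ^ 2 * (R ^ t * r ^ t)) := by field_simp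
    _ ≤ 3 ^ d * μ.real univ * (3 ^ d * (C' * R ^ t)) / (c ^ 2 * (R ^ t * r ^ t)) := by
        gcongr
    _ ≤ 3 ^ d * (covNum d k K * (C' * r ^ t)) * (3 ^ d * (C' * R ^ t)) /
          (c ^ 2 * (R ^ t * r ^ t)) := by gcongr
    _ = (3 ^ d * C' / c) ^ 2 * covNum d k K := by field_simp

lemma AhlforsRegular.exists_measure_bounds {t : ℝ} {K : Set (EuclideanSpace ℝ (Fin d))}
    (h : AhlforsRegular t K) (ht : 0 ≤ t) (hK : Bornology.IsBounded K) (hnt : K.Nontrivial) :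
    ∃ μ : Measure (EuclideanSpace ℝ (Fin d)), IsFiniteMeasure μ ∧ μ Kᶜ = 0 ∧
      ∃ c C : ℝ, 0 < c ∧ 0 < C ∧
        (∀ x ∈ K, ∀ ρ, 0 < ρ → ρ ≤ 1 → c * ρ ^ t ≤ μ.real (closedBall x ρ)) ∧
        (∀ x ∈ K, ∀ ρ, 0 < ρ → μ.real (closedBall x ρ) ≤ C * ρ ^ t) := by
  obtain ⟨μ, c, C, hc, hcC, hμK, hball⟩ := h
  have hC : 0 < C := hc.trans_le hcC
  set D := diam K
  have hD : 0 < D := diam_pos hnt hK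
  obtain ⟨p, hp⟩ := hnt.nonempty
  have hle_diam : ∀ x ∈ K, ∀ s, μ s ≤ μ (closedBall x D) := fun x hx s =>
    calc μ s ≤ μ univ := measure_mono (subset_univ s)
      _ = μ K := (measure_congr (ae_eq_univ.mpr hμK)).symm
      _ ≤ μ (closedBall x D) := measure_mono fun y hy => dist_le_diam_of_mem hK hy hx
  have : IsFiniteMeasure μ :=
    ⟨((hle_diam p hp univ).trans (hball p hp D hD le_rfl).2).trans_lt ENNReal.ofReal_lt_top⟩
  have hlow : ∀ x ∈ K, ∀ ρ, 0 < ρ → ρ ≤ D →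
      c * ρ ^ t ≤ μ.real (closedBall x ρ) :=
    fun x hx ρ hρ hρD => (ENNReal.ofReal_le_iff_le_toReal (measure_ne_top _ _)).mp
      (hball x hx ρ hρ hρD).1
  have hup : ∀ x ∈ K, ∀ ρ, 0 < ρ → ρ ≤ D →
      μ.real (closedBall x ρ) ≤ C * ρ ^ t := fun x hx ρ hρ hρD =>
    ENNReal.toReal_le_of_le_ofReal (by positivity) (hball x hx ρ hρ hρD).2
  refine ⟨μ, this, hμK, c * min 1 (D ^ t), C, by positivity, hC, ?_, ?_⟩
  · intro x hx ρ hρ hρ1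
    rcases le_or_gt ρ D with hρD | hDρ
    · calc c * min 1 (D ^ t) * ρ ^ t ≤ c * ρ ^ t := by
            gcongr; exact mul_le_of_le_one_right hc.le (min_le_left _ _)
        _ ≤ _ := hlow x hx ρ hρ hρD
    · calc c * min 1 (D ^ t) * ρ ^ t ≤ c * D ^ t * 1 := by
            gcongr
            exacts [min_le_right _ _, Real.rpow_le_one hρ.le hρ1 ht]
        _ = c * D ^ t := mul_one _
        _ ≤ μ.real (closedBall x D) := hlow x hx D hD le_rfl
        _ ≤ _ := measureReal_mono (closedBall_subset_closedBall hDρ.le)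
  · intro x hx ρ hρ
    rcases le_or_gt ρ D with hρD | hDρ
    · exact hup x hx ρ hρ hρD
    · calc μ.real (closedBall x ρ) ≤ μ.real (closedBall x D) :=
            ENNReal.toReal_mono (measure_ne_top _ _) (hle_diam x hx _)
        _ ≤ C * D ^ t := hup x hx D hD le_rfl
        _ ≤ C * ρ ^ t := by gcongr

theorem statement19 (d : ℕ) (t : ℝ) (ht : 0 < t)
    (K : Set (EuclideanSpace ℝ (Fin d))) (hK : IsCompact K)
    (hreg : AhlforsRegular t K) :
    SubUniformlyDistributed K := by
  rcases K.subsingleton_or_nontrivial with hs | hnt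
  · exact subUniformlyDistributed_of_subsingleton hs
  obtain ⟨μ, _, hμK, c, C, hc, hC, hlow, hup⟩ :=
    hreg.exists_measure_bounds ht.le hK.isBounded hnt
  exact subUniformlyDistributed_of_measure_bounds hK.isBounded μ hμK hc hC hlow hup
end
end
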